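/- arXiv:1209.3459 — 7 statements merged into one kernel-verified Lean document; each statement's English description precedes it below -/
import Mathlib

section
/- Every maximal abelian *-subalgebra (MASA) of an infinite-dimensional C*-algebra is infinite-dimensional. -/
/-!
Let `A` be a finite-dimensional MASA. Being commutative inside a C⋆-algebra, `A` is reduced, and
every idempotent of `A` is a projection. For `b ∈ A`, multiplication by `b` is injective on the
finite-dimensional space `b A`, hence bijective, which produces an idempotent `b y` with
`b (b y) = b`. From this, an idempotent of maximal rank is a unit `e` of `A`, and (using
eigenvectors over `ℂ`) every idempotent of `A` is a linear combination of minimal idempotents `p`,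
those with `A p = ℂ p`.

Maximality says that every element of `B` commuting with `A` lies in `A`. Hence `e` is a unit
of `B`: `(x - x e)⋆ (x - x e)` commutes with `A` since `e` kills it on both sides. Likewise
`p B p = ℂ p`, and each corner `p B p'` is at most one-dimensional: for a nonzero `u` in it,
`x (u⋆ u) = (x u⋆) u` with `u⋆ u ∈ ℂ p'` nonzero and `x u⋆ ∈ ℂ p`. So `B = e B e` is spanned by
finitely many corners.
-/

open Submodule

namespace NonUnitalSubalgebra

variable {K R : Type*} [Field K] [NonUnitalRing R] [Module K R] [SMulCommClass K R R]
  (A : NonUnitalSubalgebra K R)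

noncomputable def mulLeftRank (e : R) : ℕ :=
  Module.finrank K (A.toSubmodule.map (LinearMap.mulLeft K e))

variable {A}

theorem map_mulLeft_le {e : R} (he : e ∈ A) :
    A.toSubmodule.map (LinearMap.mulLeft K e) ≤ A.toSubmodule := by
  rintro _ ⟨a, ha, rfl⟩
  exact A.mul_mem he ha

theorem mulLeftRank_le [FiniteDimensional K A] {e : R} (he : e ∈ A) :
    A.mulLeftRank e ≤ Module.finrank K A :=
  Submodule.finrank_mono (map_mulLeft_le he)

theorem mulLeftRank_lt [FiniteDimensional K A] (hcomm : ∀ x ∈ A, ∀ y ∈ A, x * y = y * x)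
    {e f : R} (he : e ∈ A) (hf : f ∈ A) (hee : IsIdempotentElem e) (hff : IsIdempotentElem f)
    (hef : e * f = e) (hne : e ≠ f) : A.mulLeftRank e < A.mulLeftRank f := by
  have hfe : f * e = e := hcomm f hf e he ▸ hef
  have : FiniteDimensional K (A.toSubmodule.map (LinearMap.mulLeft K f)) :=
    Submodule.finiteDimensional_of_le (map_mulLeft_le hf)
  refine Submodule.finrank_lt_finrank_of_lt (lt_of_le_not_ge ?_ fun hle => hne ?_)
  · rintro _ ⟨a, ha, rfl⟩
    exact ⟨e * a, A.mul_mem he ha, by simp [← mul_assoc, hfe]⟩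
  · obtain ⟨a, -, ha⟩ := hle ⟨f, hf, hff.eq⟩
    simp only [LinearMap.mulLeft_apply] at ha
    rw [← hef, ← ha, ← mul_assoc, hee.eq]

theorem exists_isIdempotentElem_mul_eq_self [FiniteDimensional K A]
    (hcomm : ∀ x ∈ A, ∀ y ∈ A, x * y = y * x) (hred : ∀ x ∈ A, x * x = 0 → x = 0)
    {b : R} (hb : b ∈ A) : ∃ y ∈ A, IsIdempotentElem (b * y) ∧ b * (b * y) = b := by
  set N := A.toSubmodule.map (LinearMap.mulLeft K b)
  have hNA : N ≤ A.toSubmodule := map_mulLeft_le hb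
  have hmulN : ∀ n ∈ N, b * n ∈ N := fun n hn => ⟨n, hNA hn, rfl⟩
  have : FiniteDimensional K N := Submodule.finiteDimensional_of_le hNA
  -- multiplication by `b` is injective on `N = b A` because `A` is reduced, hence bijective
  have hinj : ∀ n ∈ N, b * n = 0 → n = 0 := by
    rintro _ ⟨a, ha, rfl⟩ h
    refine hred _ (A.mul_mem hb ha) ?_
    simp only [LinearMap.mulLeft_apply] at h ⊢
    calc b * a * (b * a) = b * (a * (b * a)) := mul_assoc _ _ _
      _ = b * (b * a) * a := by rw [hcomm a ha _ (A.mul_mem hb ha), ← mul_assoc]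
      _ = 0 := by rw [h, zero_mul]
  have hsurj : ∀ m ∈ N, ∃ n ∈ N, b * n = m := by
    have hL : Function.Surjective ((LinearMap.mulLeft K b).restrict hmulN) :=
      LinearMap.injective_iff_surjective.mp <| (injective_iff_map_eq_zero _).mpr
        fun n h => Subtype.ext (hinj n n.2 (congrArg Subtype.val h))
    intro m hm
    obtain ⟨n, hn⟩ := hL ⟨m, hm⟩
    exact ⟨n, n.2, congrArg Subtype.val hn⟩
  have hbN : b ∈ N := by
    obtain ⟨_, ⟨a, ha, rfl⟩, hab⟩ := hsurj (b * b) ⟨b, hb, rfl⟩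
    simp only [LinearMap.mulLeft_apply] at hab
    have hk : b - b * a ∈ A := A.sub_mem hb (A.mul_mem hb ha)
    have hbk : b * (b - b * a) = 0 := by rw [mul_sub, hab, sub_self]
    have hkk : (b - b * a) * (b - b * a) = 0 := by
      rw [mul_sub (b - b * a), ← mul_assoc _ b a, hcomm _ hk b hb, hbk, zero_mul, sub_self]
    have hba : b = b * a := sub_eq_zero.mp (hred _ hk hkk)
    rw [hba]
    exact ⟨a, ha, rfl⟩
  obtain ⟨_, ⟨y, hy, rfl⟩, hby⟩ := hsurj b hbN
  simp only [LinearMap.mulLeft_apply] at hby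
  refine ⟨y, hy, ?_, hby⟩
  have hmem : b * y * (b * y) - b * y ∈ N :=
    ⟨y * (b * y) - y, A.sub_mem (A.mul_mem hy (A.mul_mem hb hy)) hy, by
      simp [mul_sub, mul_assoc]⟩
  refine sub_eq_zero.mp (hinj _ hmem ?_)
  rw [mul_sub, ← mul_assoc, hby, hby, sub_self]

theorem exists_isIdempotentElem_forall_mul_eq [FiniteDimensional K A]
    (hcomm : ∀ x ∈ A, ∀ y ∈ A, x * y = y * x) (hred : ∀ x ∈ A, x * x = 0 → x = 0) :
    ∃ e ∈ A, IsIdempotentElem e ∧ ∀ a ∈ A, e * a = a := by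
  classical
  let P n := ∃ e ∈ A, IsIdempotentElem e ∧ A.mulLeftRank e = n
  have hP0 : P 0 := ⟨0, A.zero_mem, .zero, by simp [mulLeftRank]⟩
  -- an idempotent of maximal rank
  obtain ⟨e, he, hee, hrank⟩ :=
    Nat.findGreatest_spec (P := P) (Nat.zero_le (Module.finrank K A)) hP0
  refine ⟨e, he, hee, fun a ha => by_contra fun hne => ?_⟩
  have hb : a - e * a ∈ A := A.sub_mem ha (A.mul_mem he ha)
  have heb : e * (a - e * a) = 0 := by rw [mul_sub, ← mul_assoc, hee.eq, sub_self]
  obtain ⟨y, hy, hg, hbg⟩ := exists_isIdempotentElem_mul_eq_self hcomm hred hb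
  set g := (a - e * a) * y
  have hgA : g ∈ A := A.mul_mem hb hy
  have heg : e * g = 0 := by rw [← mul_assoc, heb, zero_mul]
  have hge : g * e = 0 := hcomm e he g hgA ▸ heg
  have hf : e + g ∈ A := A.add_mem he hgA
  have hff : IsIdempotentElem (e + g) := by
    simp only [IsIdempotentElem, mul_add, add_mul, hee.eq, hg.eq, heg, hge, add_zero, zero_add]
  have hef : e * (e + g) = e := by rw [mul_add, hee.eq, heg, add_zero]
  have hg0 : g ≠ 0 := fun h => hne (by
    rw [h, mul_zero] at hbg
    exact (sub_eq_zero.mp hbg.symm).symm)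
  have hne' : e ≠ e + g := fun h => hg0 (left_eq_add.mp h)
  have hlt := mulLeftRank_lt hcomm he hf hee hff hef hne'
  have hle := Nat.le_findGreatest (P := P) (mulLeftRank_le hf) ⟨e + g, hf, hff, rfl⟩
  omega

theorem exists_eigenvector_of_isIdempotentElem [IsAlgClosed K] [FiniteDimensional K A]
    (hcomm : ∀ x ∈ A, ∀ y ∈ A, x * y = y * x) {q a : R} (hq : q ∈ A)
    (hqq : IsIdempotentElem q) (hq0 : q ≠ 0) (ha : a ∈ A) :
    ∃ (c : K) (x : R), x ∈ A ∧ q * x = x ∧ x ≠ 0 ∧ a * x = c • x := by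
  set V := A.toSubmodule.map (LinearMap.mulLeft K q)
  have hVA : V ≤ A.toSubmodule := map_mulLeft_le hq
  have : FiniteDimensional K V := Submodule.finiteDimensional_of_le hVA
  have hqV : q ∈ V := ⟨q, hq, hqq.eq⟩
  have : Nontrivial V := ⟨⟨⟨q, hqV⟩, 0, fun h => hq0 (congrArg Subtype.val h)⟩⟩
  have haV : ∀ v ∈ V, a * v ∈ V := by
    rintro _ ⟨y, hy, rfl⟩
    exact ⟨a * y, A.mul_mem ha hy, by simp [← mul_assoc, hcomm a ha q hq]⟩
  obtain ⟨c, hc⟩ := Module.End.exists_eigenvalue ((LinearMap.mulLeft K a).restrict haV)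
  obtain ⟨⟨x, hxV⟩, hx⟩ := hc.exists_hasEigenvector
  refine ⟨c, x, hVA hxV, ?_, fun h => hx.2 (Subtype.ext h), ?_⟩
  · obtain ⟨y, -, rfl⟩ := hxV
    simp [← mul_assoc, hqq.eq]
  · exact congrArg Subtype.val hx.apply_eq_smul

theorem exists_isIdempotentElem_lt [IsScalarTower K R R] [IsAlgClosed K] [FiniteDimensional K A]
    (hcomm : ∀ x ∈ A, ∀ y ∈ A, x * y = y * x) (hred : ∀ x ∈ A, x * x = 0 → x = 0)
    {q a : R} (hq : q ∈ A) (hqq : IsIdempotentElem q) (ha : a ∈ A)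
    (hna : ∀ c : K, a * q ≠ c • q) :
    ∃ r ∈ A, IsIdempotentElem r ∧ r * q = r ∧ r ≠ 0 ∧ r ≠ q := by
  have hq0 : q ≠ 0 := by rintro rfl; exact hna 0 (by simp)
  obtain ⟨c, x, hxA, hqx, hx0, hax⟩ :=
    exists_eigenvector_of_isIdempotentElem hcomm hq hqq hq0 ha
  set b := a * q - c • q
  have hbA : b ∈ A := A.sub_mem (A.mul_mem ha hq) (A.smul_mem c hq)
  have hbq : b * q = b := by simp only [b, sub_mul, smul_mul_assoc, mul_assoc, hqq.eq]
  have hbx : b * x = 0 := by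
    simp only [b, sub_mul, smul_mul_assoc, mul_assoc, hqx, hax, sub_self]
  obtain ⟨y, hyA, hidem, hby⟩ := exists_isIdempotentElem_mul_eq_self hcomm hred hbA
  refine ⟨b * y, A.mul_mem hbA hyA, hidem, ?_, fun h => ?_, fun h => hx0 ?_⟩
  · rw [mul_assoc, hcomm y hyA q hq, ← mul_assoc, hbq]
  · exact hna c (sub_eq_zero.mp (show b = 0 by rw [← hby, h, mul_zero]))
  · rw [← hqx, ← h, mul_assoc, hcomm y hyA x hxA, ← mul_assoc, hbx, zero_mul]

variable (A) in
def minimalIdempotents : Set R :=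
  {p | p ∈ A ∧ IsIdempotentElem p ∧ ∀ a ∈ A, ∃ c : K, a * p = c • p}

theorem mem_span_minimalIdempotents [IsScalarTower K R R] [IsAlgClosed K] [FiniteDimensional K A]
    (hcomm : ∀ x ∈ A, ∀ y ∈ A, x * y = y * x) (hred : ∀ x ∈ A, x * x = 0 → x = 0)
    {q : R} (hq : q ∈ A) (hqq : IsIdempotentElem q) :
    q ∈ span K A.minimalIdempotents := by
  induction hn : A.mulLeftRank q using Nat.strong_induction_on generalizing q with
  | _ n ih =>
  by_cases hmin : ∀ a ∈ A, ∃ c : K, a * q = c • q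
  · exact subset_span ⟨hq, hqq, hmin⟩
  push Not at hmin
  obtain ⟨a, ha, hna⟩ := hmin
  obtain ⟨r, hrA, hrr, hrq, hr0, hrne⟩ := exists_isIdempotentElem_lt hcomm hred hq hqq ha hna
  have hqr : q * r = r := hcomm q hq r hrA ▸ hrq
  have hsA : q - r ∈ A := A.sub_mem hq hrA
  have hss : IsIdempotentElem (q - r) := by
    simp only [IsIdempotentElem, mul_sub, sub_mul, hqq.eq, hrr.eq, hrq, hqr, sub_self, sub_zero]
  have hsq : (q - r) * q = q - r := by rw [sub_mul, hqq.eq, hrq]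
  have hsne : q - r ≠ q := fun h => hr0 (by simpa using h)
  rw [← sub_add_cancel q r]
  exact add_mem
    (ih _ (hn ▸ mulLeftRank_lt hcomm hsA hq hss hqq hsq hsne) hsA hss rfl)
    (ih _ (hn ▸ mulLeftRank_lt hcomm hrA hq hrr hqq hrq hrne) hrA hrr rfl)

theorem eq_smul_of_mem_minimalIdempotents [IsScalarTower K R R]
    (hcomm : ∀ x ∈ A, ∀ y ∈ A, x * y = y * x) (hA' : ∀ x : R, (∀ a ∈ A, Commute a x) → x ∈ A)
    {p x : R} (hp : p ∈ A.minimalIdempotents) (hpx : p * x = x) (hxp : x * p = x) :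
    ∃ c : K, x = c • p := by
  obtain ⟨hpA, -, hpmin⟩ := hp
  have hxA : x ∈ A := hA' x fun a ha => by
    obtain ⟨c, hc⟩ := hpmin a ha
    calc a * x = a * p * x := by rw [mul_assoc, hpx]
      _ = x * (a * p) := by rw [hc, smul_mul_assoc, mul_smul_comm, hpx, hxp]
      _ = x * a := by rw [← hcomm p hpA a ha, ← mul_assoc, hxp]
  obtain ⟨c, hc⟩ := hpmin x hxA
  exact ⟨c, hxp ▸ hc⟩

end NonUnitalSubalgebra

theorem finiteDimensional_of_forall_mul_mul_mem_span_singleton {K R : Type*} [Field K]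
    [NonUnitalRing R] [Module K R] [IsScalarTower K R R] [SMulCommClass K R R]
    (T : Finset R) {e : R} (he : e ∈ span K (T : Set R)) (hunit : ∀ x, e * x * e = x)
    (hT : ∀ p ∈ T, ∀ p' ∈ T, ∃ u : R, ∀ x, p * x * p' ∈ K ∙ u) : FiniteDimensional K R := by
  classical
  choose! u hu using hT
  obtain ⟨c, -, rfl⟩ := Submodule.mem_span_finset.mp he
  refine Module.finite_def.mpr
    ⟨(T ×ˢ T).image fun pp => u pp.1 pp.2, eq_top_iff.mpr fun x _ => ?_⟩
  rw [← hunit x, Finset.sum_mul, Finset.sum_mul]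
  refine sum_mem fun p hp => ?_
  rw [Finset.mul_sum]
  refine sum_mem fun p' hp' => ?_
  rw [smul_mul_assoc, smul_mul_assoc, mul_smul_comm]
  refine smul_mem _ _ (smul_mem _ _ (span_mono ?_ (hu p hp p' hp' x)))
  simpa using ⟨p, hp, p', hp', rfl⟩

section CStarRing

variable {E : Type*} [NonUnitalNormedRing E] [StarRing E] [CStarRing E]

theorem IsStarNormal.eq_zero_of_mul_self_eq_zero {x : E} (hx : IsStarNormal x)
    (h : x * x = 0) : x = 0 := by
  have hsq : star (star x * x) * (star x * x) = 0 := by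
    rw [star_mul, star_star, mul_assoc, ← mul_assoc x, ← hx.star_comm_self.eq, mul_assoc,
      h, mul_zero, mul_zero]
  rwa [CStarRing.star_mul_self_eq_zero_iff, CStarRing.star_mul_self_eq_zero_iff] at hsq

theorem IsStarNormal.isSelfAdjoint_of_isIdempotentElem {p : E} (hn : IsStarNormal p)
    (hp : IsIdempotentElem p) : IsSelfAdjoint p := by
  have hq : IsIdempotentElem (star p) := IsIdempotentElem.star_iff.mpr hp
  have hc : star p * p = p * star p := hn.star_comm_self.eq
  have key : star (p - star p * p) * (p - star p * p) = 0 := by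
    simp only [star_sub, star_mul, star_star, mul_sub, sub_mul, mul_assoc, hp.eq]
    rw [← mul_assoc p, ← hc]
    simp only [← mul_assoc, hq.eq, sub_self]
    rw [mul_assoc, hp.eq, sub_self, sub_zero]
  have hpq : p = star p * p := sub_eq_zero.mp ((CStarRing.star_mul_self_eq_zero_iff _).mp key)
  rw [IsSelfAdjoint, hpq, star_mul, star_star]

end CStarRing

namespace NonUnitalStarSubalgebra

open scoped ComplexStarModule

variable {B : Type*} [NonUnitalNormedRing B] [StarRing B] [CStarRing B] [NormedSpace ℂ B]
  {A : NonUnitalStarSubalgebra ℂ B}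

theorem le_of_mul_comm_of_le
    (hmax : ∀ C : NonUnitalStarSubalgebra ℂ B, IsClosed (C : Set B) →
      (∀ x ∈ C, ∀ y ∈ C, x * y = y * x) → A ≤ C → C = A)
    {D : NonUnitalStarSubalgebra ℂ B} (hD : ∀ x ∈ D, ∀ y ∈ D, x * y = y * x) (hAD : A ≤ D) :
    D ≤ A := by
  have hDc : ∀ x ∈ D.topologicalClosure, ∀ y ∈ D.topologicalClosure, x * y = y * x := by
    let _ := D.nonUnitalCommSemiringTopologicalClosure fun x y => Subtype.ext (hD x x.2 y y.2)
    exact fun x hx y hy =>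
      congrArg Subtype.val (mul_comm (⟨x, hx⟩ : D.topologicalClosure) ⟨y, hy⟩)
  rw [← hmax _ D.isClosed_topologicalClosure hDc (hAD.trans D.le_topologicalClosure)]
  exact D.le_topologicalClosure

theorem mem_of_forall_commute [IsScalarTower ℂ B B] [SMulCommClass ℂ B B] [StarModule ℂ B]
    (hcomm : ∀ x ∈ A, ∀ y ∈ A, x * y = y * x)
    (hmax : ∀ C : NonUnitalStarSubalgebra ℂ B, IsClosed (C : Set B) →
      (∀ x ∈ C, ∀ y ∈ C, x * y = y * x) → A ≤ C → C = A)
    {x : B} (hx : ∀ a ∈ A, Commute a x) : x ∈ A := by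
  have hsa : ∀ y : B, IsSelfAdjoint y → (∀ a ∈ A, Commute a y) → y ∈ A := by
    intro y hy hyA
    have hs : ∀ a ∈ insert y (A : Set B), ∀ b ∈ insert y (A : Set B), a * b = b * a := by
      rintro a (rfl | ha) b (rfl | hb)
      exacts [rfl, (hyA b hb).eq.symm, hyA a ha, hcomm a ha b hb]
    have hs' : ∀ a ∈ insert y (A : Set B), ∀ b ∈ insert y (A : Set B), a * star b = star b * a := by
      rintro a ha b (rfl | hb)
      · rw [hy.star_eq]
        exact hs a ha _ (Set.mem_insert _ _)
      · exact hs a ha _ (Set.mem_insert_of_mem _ (star_mem hb))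
    have := NonUnitalStarAlgebra.isMulCommutative_adjoin ℂ hs hs'
    refine le_of_mul_comm_of_le hmax (fun a ha b hb => setLike_mul_comm ha hb)
      (fun a ha => NonUnitalStarAlgebra.subset_adjoin ℂ _ (Set.mem_insert_of_mem _ ha))
      (NonUnitalStarAlgebra.subset_adjoin ℂ _ (Set.mem_insert _ _))
  have hxs : ∀ a ∈ A, Commute a (star x) := fun a ha => by
    simpa using (hx (star a) (star_mem ha)).star_star
  rw [← realPart_add_I_smul_imaginaryPart x]
  refine add_mem (hsa _ (ℜ x).2 fun a ha => ?_)
    (SMulMemClass.smul_mem _ (hsa _ (ℑ x).2 fun a ha => ?_))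
  · rw [realPart_apply_coe]
    exact ((hx a ha).add_right (hxs a ha)).smul_right _
  · rw [imaginaryPart_apply_coe]
    exact (((hx a ha).sub_right (hxs a ha)).smul_right _).smul_right _

theorem mul_eq_self_of_forall_commute (hA' : ∀ x : B, (∀ a ∈ A, Commute a x) → x ∈ A)
    {e : B} (he : IsStarProjection e) (hunit : ∀ a ∈ A, e * a = a ∧ a * e = a) (x : B) :
    e * x = x ∧ x * e = x := by
  have hright : ∀ x : B, x * e = x := by
    intro x
    set y := x - x * e
    have hye : y * e = 0 := by rw [sub_mul, mul_assoc, he.isIdempotentElem.eq, sub_self]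
    have hey : e * star y = 0 := by
      rw [← he.isSelfAdjoint.star_eq, ← star_mul, hye, star_zero]
    -- `star y * y` is killed by `e` on both sides, hence by all of `A`
    have hw : star y * y ∈ A := hA' _ fun a ha => by
      have h1 : a * (star y * y) = 0 := by
        rw [← (hunit a ha).2, mul_assoc, ← mul_assoc e, hey, zero_mul, mul_zero]
      have h2 : star y * y * a = 0 := by
        rw [← (hunit a ha).1, ← mul_assoc, mul_assoc _ y, hye, mul_zero, zero_mul]
      exact h1.trans h2.symm
    have : star y * y = 0 := by rw [← (hunit _ hw).1, ← mul_assoc, hey, zero_mul]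
    exact (sub_eq_zero.mp ((CStarRing.star_mul_self_eq_zero_iff y).mp this)).symm
  refine ⟨?_, hright x⟩
  rw [← star_star (e * x), star_mul, he.isSelfAdjoint.star_eq, hright, star_star]

theorem exists_forall_mul_mul_mem_span_singleton [IsScalarTower ℂ B B] [SMulCommClass ℂ B B]
    (hcomm : ∀ x ∈ A, ∀ y ∈ A, x * y = y * x) (hA' : ∀ x : B, (∀ a ∈ A, Commute a x) → x ∈ A)
    {p p' : B} (hp : p ∈ A.toNonUnitalSubalgebra.minimalIdempotents)
    (hp' : p' ∈ A.toNonUnitalSubalgebra.minimalIdempotents) :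
    ∃ u : B, ∀ x, p * x * p' ∈ ℂ ∙ u := by
  by_cases h : ∀ x, p * x * p' = 0
  · exact ⟨0, fun x => by simp [h x]⟩
  push Not at h
  obtain ⟨x₀, hu0⟩ := h
  refine ⟨p * x₀ * p', fun x => ?_⟩
  have hsa : ∀ q ∈ A.toNonUnitalSubalgebra.minimalIdempotents, IsSelfAdjoint q := fun q hq =>
    (⟨hcomm _ (star_mem hq.1) _ hq.1⟩ : IsStarNormal q).isSelfAdjoint_of_isIdempotentElem hq.2.1
  set u := p * x₀ * p'
  set v := p * x * p'
  have hpu : p * u = u := by simp only [u, ← mul_assoc, hp.2.1.eq]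
  have hup : u * p' = u := by simp only [u, mul_assoc, hp'.2.1.eq]
  have hpv : p * v = v := by simp only [v, ← mul_assoc, hp.2.1.eq]
  have hvp : v * p' = v := by simp only [v, mul_assoc, hp'.2.1.eq]
  have hsup : star u * p = star u := by rw [← (hsa p hp).star_eq, ← star_mul, hpu]
  have hpsu : p' * star u = star u := by rw [← (hsa p' hp').star_eq, ← star_mul, hup]
  obtain ⟨α, hα⟩ := A.toNonUnitalSubalgebra.eq_smul_of_mem_minimalIdempotents hcomm hA' hp'
    (x := star u * u) (by rw [← mul_assoc, hpsu]) (by rw [mul_assoc, hup])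
  obtain ⟨δ, hδ⟩ := A.toNonUnitalSubalgebra.eq_smul_of_mem_minimalIdempotents hcomm hA' hp
    (x := v * star u) (by rw [← mul_assoc, hpv]) (by rw [mul_assoc, hsup])
  have hα0 : α ≠ 0 := by
    rintro rfl
    exact hu0 ((CStarRing.star_mul_self_eq_zero_iff u).mp (by rw [hα, zero_smul]))
  have key : α • v = δ • u :=
    calc α • v = v * (α • p') := by rw [mul_smul_comm, hvp]
      _ = v * star u * u := by rw [← hα, ← mul_assoc]
      _ = δ • u := by rw [hδ, smul_mul_assoc, hpu]
  refine Submodule.mem_span_singleton.mpr ⟨α⁻¹ * δ, ?_⟩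
  rw [mul_smul, ← key, inv_smul_smul₀ hα0]

end NonUnitalStarSubalgebra

theorem masa_of_infinite_dimensional_cstar_is_infinite_dimensional_general
    {B : Type*} [NonUnitalNormedRing B] [StarRing B] [CStarRing B] [NormedSpace ℂ B]
    [IsScalarTower ℂ B B] [SMulCommClass ℂ B B] [StarModule ℂ B]
    (hB : ¬ FiniteDimensional ℂ B)
    (A : NonUnitalStarSubalgebra ℂ B)
    (hcomm : ∀ x ∈ A, ∀ y ∈ A, x * y = y * x)
    (hmax : ∀ C : NonUnitalStarSubalgebra ℂ B, IsClosed (C : Set B) →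
      (∀ x ∈ C, ∀ y ∈ C, x * y = y * x) → A ≤ C → C = A) :
    ¬ FiniteDimensional ℂ A := by
  intro hfin
  apply hB
  have : FiniteDimensional ℂ A.toNonUnitalSubalgebra := hfin
  have hnormal : ∀ x ∈ A, IsStarNormal x := fun x hx => ⟨hcomm _ (star_mem hx) _ hx⟩
  have hred : ∀ x ∈ A, x * x = 0 → x = 0 := fun x hx => (hnormal x hx).eq_zero_of_mul_self_eq_zero
  have hA' : ∀ x : B, (∀ a ∈ A, Commute a x) → x ∈ A := fun _ =>
    NonUnitalStarSubalgebra.mem_of_forall_commute hcomm hmax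
  obtain ⟨e, heA, hee, hunit⟩ :=
    A.toNonUnitalSubalgebra.exists_isIdempotentElem_forall_mul_eq hcomm hred
  have heB := NonUnitalStarSubalgebra.mul_eq_self_of_forall_commute hA'
    ⟨hee, (hnormal e heA).isSelfAdjoint_of_isIdempotentElem hee⟩
    fun a ha => ⟨hunit a ha, hcomm a ha e heA ▸ hunit a ha⟩
  obtain ⟨T, hTmin, heT⟩ := Submodule.mem_span_finite_of_mem_span
    (A.toNonUnitalSubalgebra.mem_span_minimalIdempotents hcomm hred heA hee)
  exact finiteDimensional_of_forall_mul_mul_mem_span_singleton T heT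
    (fun x => by rw [(heB x).1, (heB x).2]) fun p hp p' hp' =>
      NonUnitalStarSubalgebra.exists_forall_mul_mul_mem_span_singleton hcomm hA' (hTmin hp)
        (hTmin hp')

/-- Every maximal abelian *-subalgebra (MASA) of an infinite-dimensional C*-algebra is
infinite-dimensional. -/
theorem masa_of_infinite_dimensional_cstar_is_infinite_dimensional
    {B : Type*} [NonUnitalNormedRing B] [StarRing B] [CStarRing B] [NormedSpace ℂ B]
    [IsScalarTower ℂ B B] [SMulCommClass ℂ B B] [StarModule ℂ B] [CompleteSpace B]
    (hB : ¬ FiniteDimensional ℂ B)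
    (A : NonUnitalStarSubalgebra ℂ B)
    (hA : IsClosed (A : Set B))
    (hcomm : ∀ x ∈ A, ∀ y ∈ A, x * y = y * x)
    (hmax : ∀ C : NonUnitalStarSubalgebra ℂ B, IsClosed (C : Set B) →
      (∀ x ∈ C, ∀ y ∈ C, x * y = y * x) → A ≤ C → C = A) :
    ¬ FiniteDimensional ℂ A :=
  masa_of_infinite_dimensional_cstar_is_infinite_dimensional_general hB A hcomm hmax
end

section
/- Let A be a SAW*-algebra and (\phi_n) a sequence of states on A. Suppose there is a sequence (a_n) of pairwise orthogonal positive elements in A with \|a_n\| = \phi_n(a_n) = 1 and \phi_n(a_m) = 0 for m \ne n. Then for every D \subseteq \mathbb{N}, the weak*-closures of \{\phi_n : n \in D\} and \{\phi_n : n \in D^c\} are disjoint. -/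
/-!
The elements `x = ∑_{n ∈ D} 2⁻ⁿ aₙ` and `y = ∑_{n ∉ D} 2⁻ⁿ aₙ` are positive and orthogonal, so the
SAW* property gives `e ≥ 0` with `e x = x` and `e y = 0`. Multiplying on the right by `aₘ` and
using orthogonality, `e aₘ² = aₘ²` for `m ∈ D` and `e aₘ² = 0` for `m ∉ D`.

Since `0 ≤ aₘ ≤ 1` and `φₘ(aₘ) = 1`, the element `c = 1 - aₘ` has `φₘ(c²) ≤ φₘ(c) = 0`, and
Cauchy–Schwarz for the GNS form `(u, v) ↦ φₘ(u* v)` gives `φₘ(b aₘ) = φₘ(b)` for every `b`.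
Hence `φₘ(e) = φₘ(e aₘ²)` is `1` on `D` and `0` off `D`, and the weak*-continuous map `ψ ↦ ψ(e)`
separates the two closures.
-/

open scoped ComplexOrder

/-- A C*-algebra is a SAW*-algebra if for any two orthogonal positive elements `x, y`
there is a positive `e` with `e x = x` and `e y = 0`. -/
def IsSAWStar (A : Type*) [NonUnitalRing A] [PartialOrder A] : Prop :=
  ∀ x y : A, 0 ≤ x → 0 ≤ y → x * y = 0 → ∃ e : A, 0 ≤ e ∧ e * x = x ∧ e * y = 0

/-- A state, as an element of the weak* dual of a unital C*-algebra. -/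
def IsState {A : Type*} [NormedRing A] [StarRing A] [NormedAlgebra ℂ A]
    (φ : WeakDual ℂ A) : Prop :=
  φ 1 = 1 ∧ ∀ x : A, 0 ≤ φ (star x * x)

theorem disjoint_closure_of_continuous_of_forall_eq {X Y : Type*} [TopologicalSpace X]
    [TopologicalSpace Y] [T1Space Y] {g : X → Y} (hg : Continuous g) {u v : Y} (huv : u ≠ v)
    {s t : Set X} (hs : ∀ x ∈ s, g x = u) (ht : ∀ x ∈ t, g x = v) :
    Disjoint (closure s) (closure t) :=
  ((Set.disjoint_singleton.mpr huv).preimage g).mono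
    (closure_minimal hs (isClosed_singleton.preimage hg))
    (closure_minimal ht (isClosed_singleton.preimage hg))

namespace PositiveLinearMap

variable {A : Type*} [CStarAlgebra A] [PartialOrder A] [StarOrderedRing A] (f : A →ₚ[ℂ] ℂ)

theorem apply_mul_eq_zero_of_apply_star_mul_self_eq_zero {c : A} (hc : f (star c * c) = 0)
    (b : A) : f (b * c) = 0 := by
  have hnorm : ‖f.toPreGNS c‖ = 0 := by
    simpa [hc] using f.preGNS_norm_sq (f.toPreGNS c)
  simpa [hnorm, preGNS_inner_def] using
    norm_inner_le_norm (𝕜 := ℂ) (f.toPreGNS (star b)) (f.toPreGNS c)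

theorem apply_mul_eq_of_mem_Icc {a : A} (ha : a ∈ Set.Icc 0 1) (hfa : f a = f 1) (b : A) :
    f (b * a) = f b := by
  set c := 1 - a
  have hc : c ∈ Set.Icc 0 1 := Set.sub_mem_Icc_zero_iff_right.mpr ha
  have hcc : f (star c * c) = 0 := by
    refine le_antisymm ?_ (f.map_nonneg (star_mul_self_nonneg c))
    calc f (star c * c) ≤ f c := by
          rw [hc.1.isSelfAdjoint.star_eq, ← sq]
          simpa using OrderHomClass.mono f (CStarAlgebra.pow_antitone hc.1 hc.2 one_le_two)
      _ = 0 := by rw [map_sub, hfa, sub_self]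
  have := f.apply_mul_eq_zero_of_apply_star_mul_self_eq_zero hcc b
  rwa [mul_sub, mul_one, map_sub, sub_eq_zero, eq_comm] at this

end PositiveLinearMap

namespace IsState

variable {A : Type*} [CStarAlgebra A] [PartialOrder A] [StarOrderedRing A] {φ : WeakDual ℂ A}

theorem apply_nonneg (hφ : IsState φ) {p : A} (hp : 0 ≤ p) : 0 ≤ φ p := by
  obtain ⟨b, rfl⟩ := CStarAlgebra.nonneg_iff_eq_star_mul_self.mp hp
  exact hφ.2 b

noncomputable def toPositiveLinearMap (hφ : IsState φ) : A →ₚ[ℂ] ℂ :=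
  .mk₀ (φ : A →L[ℂ] ℂ).toLinearMap fun _ ↦ hφ.apply_nonneg

theorem apply_mul_eq_of_apply_eq_one (hφ : IsState φ) {a : A} (ha₀ : 0 ≤ a) (ha₁ : ‖a‖ ≤ 1)
    (hφa : φ a = 1) (b : A) : φ (b * a) = φ b :=
  hφ.toPositiveLinearMap.apply_mul_eq_of_mem_Icc
    (CStarAlgebra.mem_Icc_iff_norm_le_one.mpr ⟨ha₀, ha₁⟩) (hφa.trans hφ.1.symm) b

theorem apply_mul_mul_self_of_apply_eq_one (hφ : IsState φ) {a : A} (ha₀ : 0 ≤ a)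
    (ha₁ : ‖a‖ ≤ 1) (hφa : φ a = 1) (b : A) : φ (b * (a * a)) = φ b := by
  rw [← mul_assoc, hφ.apply_mul_eq_of_apply_eq_one ha₀ ha₁ hφa,
    hφ.apply_mul_eq_of_apply_eq_one ha₀ ha₁ hφa]

end IsState

section WeightedSum

variable {A : Type*} [NormedRing A] [NormedAlgebra ℂ A] {a : ℕ → A}

noncomputable def weightedSum (a : ℕ → A) (s : Set ℕ) : A :=
  ∑' n, s.indicator (fun n ↦ (2 : ℂ)⁻¹ ^ n • a n) n

variable [CompleteSpace A]

theorem summable_indicator_weighted (ha : ∀ n, ‖a n‖ ≤ 1) (s : Set ℕ) :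
    Summable (s.indicator fun n ↦ (2 : ℂ)⁻¹ ^ n • a n) := by
  refine .of_norm_bounded summable_geometric_two fun n ↦ ?_
  calc ‖s.indicator (fun n ↦ (2 : ℂ)⁻¹ ^ n • a n) n‖ ≤ ‖(2 : ℂ)⁻¹ ^ n • a n‖ :=
        norm_indicator_le_norm_self _ _
    _ ≤ (1 / 2) ^ n := by
        rw [norm_smul, norm_pow, norm_inv, Complex.norm_ofNat, one_div]
        exact mul_le_of_le_one_right (by positivity) (ha n)

theorem weightedSum_mul (horth : Pairwise fun m n ↦ a m * a n = 0) (ha : ∀ n, ‖a n‖ ≤ 1)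
    (s : Set ℕ) (m : ℕ) :
    weightedSum a s * a m = s.indicator (fun n ↦ (2 : ℂ)⁻¹ ^ n • (a n * a n)) m := by
  rw [weightedSum, ← (summable_indicator_weighted ha s).tsum_mul_right, tsum_eq_single m]
  · simp only [← Set.indicator_mul_left, smul_mul_assoc]
  · intro n hnm
    by_cases hn : n ∈ s
    · rw [Set.indicator_of_mem hn, smul_mul_assoc, horth hnm, smul_zero]
    · rw [Set.indicator_of_notMem hn, zero_mul]

theorem weightedSum_mul_weightedSum (horth : Pairwise fun m n ↦ a m * a n = 0)
    (ha : ∀ n, ‖a n‖ ≤ 1) {s t : Set ℕ} (hst : Disjoint s t) :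
    weightedSum a s * weightedSum a t = 0 := by
  nth_rw 2 [weightedSum]
  rw [← (summable_indicator_weighted ha t).tsum_mul_left]
  refine (tsum_congr fun n ↦ ?_).trans tsum_zero
  by_cases hn : n ∈ t
  · rw [Set.indicator_of_mem hn, mul_smul_comm, weightedSum_mul horth ha,
      Set.indicator_of_notMem (Set.disjoint_right.mp hst hn), smul_zero]
  · rw [Set.indicator_of_notMem hn, mul_zero]

theorem mul_weightedSum_mul_of_mem (horth : Pairwise fun m n ↦ a m * a n = 0)
    (ha : ∀ n, ‖a n‖ ≤ 1) (e : A) {s : Set ℕ} {m : ℕ} (hm : m ∈ s) :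
    e * weightedSum a s * a m = (2 : ℂ)⁻¹ ^ m • (e * (a m * a m)) := by
  rw [mul_assoc, weightedSum_mul horth ha, Set.indicator_of_mem hm, mul_smul_comm]

theorem mul_mul_self_eq_of_mul_weightedSum_eq (horth : Pairwise fun m n ↦ a m * a n = 0)
    (ha : ∀ n, ‖a n‖ ≤ 1) {e : A} {s : Set ℕ} (he : e * weightedSum a s = weightedSum a s)
    {m : ℕ} (hm : m ∈ s) : e * (a m * a m) = a m * a m := by
  have h := mul_weightedSum_mul_of_mem horth ha e hm
  rwa [he, ← one_mul (weightedSum a s), mul_weightedSum_mul_of_mem horth ha 1 hm, one_mul,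
    (smul_right_injective A (by simp)).eq_iff, eq_comm] at h

theorem mul_mul_self_eq_zero_of_mul_weightedSum_eq_zero
    (horth : Pairwise fun m n ↦ a m * a n = 0) (ha : ∀ n, ‖a n‖ ≤ 1) {e : A} {s : Set ℕ}
    (he : e * weightedSum a s = 0) {m : ℕ} (hm : m ∈ s) : e * (a m * a m) = 0 := by
  have h := mul_weightedSum_mul_of_mem horth ha e hm
  rwa [he, zero_mul, eq_comm, smul_eq_zero, or_iff_right (by simp)] at h

theorem weightedSum_nonneg {A : Type*} [CStarAlgebra A] [PartialOrder A] [StarOrderedRing A]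
    {a : ℕ → A} (ha : ∀ n, 0 ≤ a n) (s : Set ℕ) : 0 ≤ weightedSum a s :=
  tsum_nonneg fun n ↦ Set.indicator_nonneg (fun n _ ↦ smul_nonneg (by positivity) (ha n)) n

end WeightedSum

theorem sawstar_disjoint_weakstar_closures_general
    {A : Type*} [NormedRing A] [StarRing A] [CStarRing A] [NormedAlgebra ℂ A]
    [StarModule ℂ A] [CompleteSpace A] [PartialOrder A] [StarOrderedRing A]
    (hA : IsSAWStar A)
    (φ : ℕ → WeakDual ℂ A) (hφ : ∀ n, IsState (φ n))
    (a : ℕ → A) (hpos : ∀ n, 0 ≤ a n)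
    (horth : ∀ m n, m ≠ n → a m * a n = 0)
    (hnorm : ∀ n, ‖a n‖ = 1)
    (heval : ∀ n, φ n (a n) = 1)
    (D : Set ℕ) :
    Disjoint (closure (φ '' D)) (closure (φ '' Dᶜ)) := by
  let _ : CStarAlgebra A := { }
  have hnorm_le (n : ℕ) : ‖a n‖ ≤ 1 := (hnorm n).le
  obtain ⟨e, -, hex, hey⟩ := hA _ _ (weightedSum_nonneg hpos D) (weightedSum_nonneg hpos Dᶜ)
    (weightedSum_mul_weightedSum horth hnorm_le disjoint_compl_right)
  have habs (n : ℕ) (b : A) : φ n (b * (a n * a n)) = φ n b :=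
    (hφ n).apply_mul_mul_self_of_apply_eq_one (hpos n) (hnorm_le n) (heval n) b
  refine disjoint_closure_of_continuous_of_forall_eq (WeakDual.eval_continuous e)
    one_ne_zero ?_ ?_
  · rintro _ ⟨m, hm, rfl⟩
    rw [← habs m e, mul_mul_self_eq_of_mul_weightedSum_eq horth hnorm_le hex hm,
      ← one_mul (a m * a m), habs m 1, (hφ m).1]
  · rintro _ ⟨m, hm, rfl⟩
    rw [← habs m e, mul_mul_self_eq_zero_of_mul_weightedSum_eq_zero horth hnorm_le hey hm,
      map_zero]

/-- Let `A` be a unital SAW*-algebra, `(φₙ)` states and `(aₙ)` pairwise orthogonal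
positive elements with `‖aₙ‖ = φₙ(aₙ) = 1` and `φₙ(aₘ) = 0` for `m ≠ n`.  Then for any
`D ⊆ ℕ` the weak*-closures of `{φₙ : n ∈ D}` and `{φₙ : n ∈ Dᶜ}` are disjoint. -/
theorem sawstar_disjoint_weakstar_closures
    {A : Type*} [NormedRing A] [StarRing A] [CStarRing A] [NormedAlgebra ℂ A]
    [StarModule ℂ A] [CompleteSpace A] [PartialOrder A] [StarOrderedRing A]
    (hA : IsSAWStar A)
    (φ : ℕ → WeakDual ℂ A) (hφ : ∀ n, IsState (φ n))
    (a : ℕ → A) (hpos : ∀ n, 0 ≤ a n)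
    (horth : ∀ m n, m ≠ n → a m * a n = 0)
    (hnorm : ∀ n, ‖a n‖ = 1)
    (heval : ∀ n, φ n (a n) = 1)
    (heval' : ∀ m n, m ≠ n → φ n (a m) = 0)
    (D : Set ℕ) :
    Disjoint (closure (φ '' D)) (closure (φ '' Dᶜ)) :=
  sawstar_disjoint_weakstar_closures_general hA φ hφ a hpos horth hnorm heval D
end

section
/- Let X, Y, Z be sets and \rho : X \times Y \to Z a map. Then exactly one of the following holds: (1) X \times Y can be covered by finitely many mutually disjoint rectangles A \times B on each of which \rho depends on at most one coordinate; (2) there exist sequences (x_i) in X and (y_i) in Y such that \rho(x_i, y_i) \ne \rho(x_j, y_k) for all i and all j < k. -/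
def DependsOnAtMostOneCoord {X Y Z : Type*} (ρ : X × Y → Z) (A : Set X) (B : Set Y) : Prop :=
  (∀ x ∈ A, ∀ y ∈ B, ∀ y' ∈ B, ρ (x, y) = ρ (x, y')) ∨
  (∀ x ∈ A, ∀ x' ∈ A, ∀ y ∈ B, ρ (x, y) = ρ (x', y))

/-!
A tiling forbids a ladder: two rungs `(xᵢ, yᵢ)`, `(xⱼ, yⱼ)` with `i < j` lie in a common tile,
and whichever coordinate the tile ignores gives `ρ(xᵢ, yᵢ) = ρ(xᵢ, yⱼ)` or
`ρ(xⱼ, yⱼ) = ρ(xᵢ, yⱼ)`.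

Conversely, let `ρ` have no ladder and let `A × B` admit no tiling. Discard the rows on which `ρ`
is constant and take a maximal finite ladder `(xᵢ, yᵢ)` in the rest. Sort the columns `b` by
which equalities `ρ(xⱼ, b) = ρ(xᵢ, yᵢ)` they satisfy. On the columns satisfying none of them,
maximality says that every value `ρ(a, b)` is one of the finitely many values `ρ(xⱼ, b)`,
`ρ(xⱼ, yₖ)`; naming values by these indices, an ultrafilter limit of the columns shows that only
finitely many column patterns occur, and these columns are tiled along the patterns. Hence some
class of columns on which `ρ(xⱼ, ·)` is a constant `w` admits no tiling, while the non-constant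
row `xⱼ` takes a value `≠ w` somewhere. Iterating yields rows `rₘ` and columns `bₘ` with
`ρ(rⱼ, bₖ) = wⱼ` for `j < k` and `ρ(rₘ, bₘ) ≠ wₘ`; an ultrafilter argument passes to a
subsequence with `ρ(rᵢ, bᵢ) ≠ wⱼ` for all `i, j`, which is a ladder.
-/

open Set Filter Function

namespace Ultrafilter

variable {α β : Type*} (U : Ultrafilter α)

lemma exists_eventually_eq [Finite β] (f : α → β) : ∃ b, ∀ᶠ a in U, f a = b :=
  U.eventually_exists_iff.1 (.of_forall fun a => ⟨f a, rfl⟩)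

lemma eventually_eventually_ne {d e : α → β} (h : ∀ a, d a ≠ e a) :
    ∀ᶠ a in U, ∀ᶠ b in U, d a ≠ e b := by
  simp_rw [Ne, U.eventually_not]
  intro H
  obtain ⟨a₀, ha₀⟩ := H.exists
  obtain ⟨a, ha, hea⟩ := (H.and ha₀).exists
  obtain ⟨b, hab, ha₀b⟩ := (ha.and ha₀).exists
  exact h a (hab.trans (ha₀b.symm.trans hea))

lemma exists_seq_of_eventually_eventually {r : α → α → Prop}
    (h : ∀ᶠ a in U, ∀ᶠ b in U, r a b) : ∃ f : ℕ → α, ∀ m n, m < n → r (f m) (f n) := by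
  obtain ⟨f, -, hf⟩ := exists_seq_of_forall_finset_exists (fun a => ∀ᶠ b in U, r a b) r
    fun s hs => (h.and ((eventually_all_finset s).2 hs)).exists
  exact ⟨f, hf⟩

end Ultrafilter

lemma exists_strictMono_forall_ne {Z : Type*} {d e : ℕ → Z} (h : ∀ i, d i ≠ e i) :
    ∃ g : ℕ → ℕ, StrictMono g ∧ ∀ i j, d (g i) ≠ e (g j) := by
  let U := hyperfilter ℕ
  have hlt : ∀ i, ∀ᶠ j in U, i < j := fun i =>
    (eventually_gt_atTop i).filter_mono Nat.hyperfilter_le_atTop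
  obtain ⟨g, hg⟩ := U.exists_seq_of_eventually_eventually
    (((U.eventually_eventually_ne h).and (U.eventually_eventually_ne fun i => (h i).symm)).mono
      fun i hi => (hlt i).and (hi.1.and hi.2))
  refine ⟨g, fun i j hij => (hg i j hij).1, fun i j => ?_⟩
  rcases lt_trichotomy i j with hij | rfl | hji
  · exact (hg i j hij).2.1
  · exact h _
  · exact (hg j i hji).2.2.symm

lemma exists_seq_of_forall_snoc {α : Type*} {p : ∀ n, (Fin n → α) → Prop} (h₀ : p 0 Fin.elim0)
    (h : ∀ n f, p n f → ∃ a, p (n + 1) (Fin.snoc f a)) : ∃ g : ℕ → α, ∀ n, p n fun i => g i := by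
  choose next hnext using h
  let s : ∀ n, {f : Fin n → α // p n f} := fun n =>
    Nat.rec ⟨Fin.elim0, h₀⟩ (fun n f => ⟨Fin.snoc f.1 (next n f.1 f.2), hnext n f.1 f.2⟩) n
  let g : ℕ → α := fun n => (s (n + 1)).1 (Fin.last n)
  refine ⟨g, fun n => ?_⟩
  suffices (s n).1 = fun i : Fin n => g i by rw [← this]; exact (s n).2
  induction n with
  | zero => funext i; exact i.elim0
  | succ n ih =>
    funext i
    rcases Fin.eq_castSucc_or_eq_last i with ⟨i, rfl⟩ | rfl
    · exact (Fin.snoc_castSucc (α := fun _ => α) _ _ i).trans (congrFun ih i)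
    · rfl

section

variable {X Y Z : Type*} {ρ : X × Y → Z}

section Tiling

variable (ρ) in
def Tileable (A : Set X) (B : Set Y) : Prop :=
  ∃ (n : ℕ) (As : Fin n → Set X) (Bs : Fin n → Set Y),
    (⋃ i, As i ×ˢ Bs i) = A ×ˢ B ∧ Pairwise (Disjoint on fun i => As i ×ˢ Bs i) ∧
    ∀ i, DependsOnAtMostOneCoord ρ (As i) (Bs i)

variable {A : Set X} {B : Set Y}

lemma Tileable.of_finite_family {ι : Type*} [Finite ι] (As : ι → Set X) (Bs : ι → Set Y)
    (hcover : (⋃ i, As i ×ˢ Bs i) = A ×ˢ B) (hdisj : Pairwise (Disjoint on fun i => As i ×ˢ Bs i))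
    (hdep : ∀ i, DependsOnAtMostOneCoord ρ (As i) (Bs i)) : Tileable ρ A B := by
  obtain ⟨n, ⟨e⟩⟩ := Finite.exists_equiv_fin ι
  refine ⟨n, As ∘ e.symm, Bs ∘ e.symm, ?_, hdisj.comp_of_injective e.symm.injective,
    fun i => hdep _⟩
  rw [← hcover]
  exact e.symm.surjective.iUnion_comp fun i => As i ×ˢ Bs i

lemma DependsOnAtMostOneCoord.tileable (h : DependsOnAtMostOneCoord ρ A B) : Tileable ρ A B :=
  Tileable.of_finite_family (ι := Unit) (fun _ => A) (fun _ => B) (iUnion_const _)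
    (fun i j hij => (hij (Subsingleton.elim i j)).elim) fun _ => h

lemma Tileable.of_partition {ι : Type*} [Finite ι] (As : ι → Set X) (Bs : ι → Set Y)
    (hcover : (⋃ i, As i ×ˢ Bs i) = A ×ˢ B) (hdisj : Pairwise (Disjoint on fun i => As i ×ˢ Bs i))
    (h : ∀ i, Tileable ρ (As i) (Bs i)) : Tileable ρ A B := by
  choose n Cs Ds hcov hdisj' hdep using h
  have hsub : ∀ i t, Cs i t ×ˢ Ds i t ⊆ As i ×ˢ Bs i := fun i t =>
    hcov i ▸ subset_iUnion (fun t => Cs i t ×ˢ Ds i t) t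
  refine Tileable.of_finite_family (ι := Σ i, Fin (n i)) (fun p => Cs p.1 p.2)
    (fun p => Ds p.1 p.2) ?_ ?_ fun p => hdep p.1 p.2
  · rw [← hcover, iUnion_sigma]
    exact iUnion_congr hcov
  · rintro ⟨i, t⟩ ⟨j, s⟩ hne
    obtain rfl | hij := eq_or_ne i j
    · exact hdisj' i fun hts => hne (congrArg (Sigma.mk i) hts)
    · exact (hdisj hij).mono (hsub i t) (hsub j s)

lemma Tileable.of_fibers_left {S : Type*} (φ : X → S) (hφ : (φ '' A).Finite)
    (h : ∀ x ∈ A, Tileable ρ {x' ∈ A | φ x' = φ x} B) : Tileable ρ A B := by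
  have := hφ.to_subtype
  refine Tileable.of_partition (ι := φ '' A) (fun s => {x ∈ A | φ x = s}) (fun _ => B) ?_ ?_ ?_
  · ext ⟨x, y⟩
    simp only [mem_iUnion, mem_prod]
    exact ⟨fun ⟨_, ⟨hx, _⟩, hy⟩ => ⟨hx, hy⟩, fun ⟨hx, hy⟩ => ⟨⟨φ x, x, hx, rfl⟩, ⟨hx, rfl⟩, hy⟩⟩
  · rintro ⟨s, _⟩ ⟨t, _⟩ hst
    exact disjoint_prod.2 <| .inl <| disjoint_left.2 fun x hs ht =>
      hst (Subtype.ext (hs.2.symm.trans ht.2))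
  · rintro ⟨_, x, hx, rfl⟩
    exact h x hx

lemma Tileable.of_fibers_right {S : Type*} (ψ : Y → S) (hψ : (ψ '' B).Finite)
    (h : ∀ y ∈ B, Tileable ρ A {y' ∈ B | ψ y' = ψ y}) : Tileable ρ A B := by
  have := hψ.to_subtype
  refine Tileable.of_partition (ι := ψ '' B) (fun _ => A) (fun s => {y ∈ B | ψ y = s}) ?_ ?_ ?_
  · ext ⟨x, y⟩
    simp only [mem_iUnion, mem_prod]
    exact ⟨fun ⟨_, hx, hy, _⟩ => ⟨hx, hy⟩, fun ⟨hx, hy⟩ => ⟨⟨ψ y, y, hy, rfl⟩, hx, hy, rfl⟩⟩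
  · rintro ⟨s, _⟩ ⟨t, _⟩ hst
    exact disjoint_prod.2 <| .inr <| disjoint_left.2 fun y hs ht =>
      hst (Subtype.ext (hs.2.symm.trans ht.2))
  · rintro ⟨_, y, hy, rfl⟩
    exact h y hy

lemma exists_not_tileable_with_nonconstant_rows (h : ¬Tileable ρ A B) :
    ∃ A' : Set X, ¬Tileable ρ A' B ∧ ∀ x ∈ A', ∃ y ∈ B, ∃ y' ∈ B, ρ (x, y) ≠ ρ (x, y') := by
  let φ : X → Prop := fun x => ∃ y ∈ B, ∃ y' ∈ B, ρ (x, y) ≠ ρ (x, y')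
  obtain ⟨x₀, -, hx₀⟩ : ∃ x₀ ∈ A, ¬Tileable ρ {x ∈ A | φ x = φ x₀} B := by
    by_contra! h'
    exact h (Tileable.of_fibers_left φ (toFinite _) h')
  by_cases hφ : φ x₀
  · exact ⟨_, hx₀, fun x hx => hx.2.mpr hφ⟩
  · refine absurd (DependsOnAtMostOneCoord.tileable (Or.inl ?_)) hx₀
    rintro x ⟨-, hx⟩ y hy y' hy'
    by_contra hne
    exact hφ (hx.mp ⟨y, hy, y', hy', hne⟩)

end Tiling

section Ladders

variable (ρ) in
def IsLadder {ι : Type*} [LT ι] (x : ι → X) (y : ι → Y) : Prop :=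
  ∀ i j k, j < k → ρ (x i, y i) ≠ ρ (x j, y k)

variable (ρ) in
def LadderFree : Prop := ∀ (x : ℕ → X) (y : ℕ → Y), ¬IsLadder ρ x y

lemma Tileable.not_isLadder {A : Set X} {B : Set Y} (h : Tileable ρ A B) {x : ℕ → X} {y : ℕ → Y}
    (hx : ∀ i, x i ∈ A) (hy : ∀ i, y i ∈ B) : ¬IsLadder ρ x y := by
  obtain ⟨n, As, Bs, hcover, -, hdep⟩ := h
  choose t ht using fun i => mem_iUnion.1 (hcover ▸ mk_mem_prod (hx i) (hy i))
  obtain ⟨i, j, hij, htij⟩ :=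
    finite_univ.exists_lt_map_eq_of_forall_mem (f := t) fun _ => mem_univ _
  have hj := htij ▸ ht j
  intro hl
  rcases hdep (t i) with hfst | hsnd
  · exact hl i i j hij (hfst _ (ht i).1 _ (ht i).2 _ hj.2)
  · exact hl j i j hij (hsnd _ hj.1 _ (ht i).1 _ hj.2)

lemma not_ladderFree_of_forall_ne {x : ℕ → X} {y : ℕ → Y} (e : ℕ → Z)
    (hcross : ∀ j k, j < k → ρ (x j, y k) = e j ∨ ρ (x j, y k) = e k)
    (hdiag : ∀ i, ρ (x i, y i) ≠ e i) : ¬LadderFree ρ := by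
  obtain ⟨g, hg, hne⟩ := exists_strictMono_forall_ne hdiag
  refine fun hρ => hρ (x ∘ g) (y ∘ g) fun i j k hjk => ?_
  rcases hcross _ _ (hg hjk) with h | h <;> simp only [comp_apply, h] <;> exact hne _ _

lemma IsLadder.mem_range_of_not_isLadder_snoc {n : ℕ} {x : Fin n → X} {y : Fin n → Y}
    (hxy : IsLadder ρ x y) {a : X} {b : Y} (hb : ∀ j i, ρ (x j, b) ≠ ρ (x i, y i))
    (hab : ¬IsLadder ρ (Fin.snoc x a) (Fin.snoc y b)) :
    ρ (a, b) ∈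
      range (Sum.elim (fun j => ρ (x j, b)) fun jk : Fin n × Fin n => ρ (x jk.1, y jk.2)) := by
  simp only [IsLadder, not_forall, not_not] at hab
  obtain ⟨i, j, k, hjk, heq⟩ := hab
  obtain ⟨j, rfl⟩ := Fin.exists_castSucc_eq.2 (hjk.trans_le (Fin.le_last k)).ne
  rcases Fin.eq_castSucc_or_eq_last i with ⟨i, rfl⟩ | rfl <;>
    rcases Fin.eq_castSucc_or_eq_last k with ⟨k, rfl⟩ | rfl <;>
    simp only [Fin.snoc_castSucc, Fin.snoc_last] at heq
  · exact absurd heq (hxy i j k (Fin.castSucc_lt_castSucc_iff.1 hjk))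
  · exact absurd heq.symm (hb j i)
  · exact ⟨Sum.inr (j, k), heq.symm⟩
  · exact ⟨Sum.inl j, heq.symm⟩

lemma LadderFree.exists_maximal_ladder (hρ : LadderFree ρ) (A : Set X) (B : Set Y) :
    ∃ (n : ℕ) (x : Fin n → X) (y : Fin n → Y), range x ⊆ A ∧ range y ⊆ B ∧ IsLadder ρ x y ∧
      ∀ a ∈ A, ∀ b ∈ B, ¬IsLadder ρ (Fin.snoc x a) (Fin.snoc y b) := by
  by_contra! hext
  let p n (f : Fin n → X × Y) := range (Prod.fst ∘ f) ⊆ A ∧ range (Prod.snd ∘ f) ⊆ B ∧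
    IsLadder ρ (Prod.fst ∘ f) (Prod.snd ∘ f)
  have hp : ∀ n f, p n f → ∃ a, p (n + 1) (Fin.snoc f a) := by
    rintro n f ⟨hA, hB, hf⟩
    obtain ⟨a, ha, b, hb, hab⟩ := hext n _ _ hA hB hf
    refine ⟨(a, b), ?_⟩
    simp only [p, Fin.comp_snoc, Fin.range_snoc, insert_subset_iff]
    exact ⟨⟨ha, hA⟩, ⟨hb, hB⟩, hab⟩
  obtain ⟨g, hg⟩ := exists_seq_of_forall_snoc (p := p)
    ⟨by simp [range_eq_empty], by simp [range_eq_empty], fun i => i.elim0⟩ hp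
  refine hρ (fun i => (g i).1) (fun i => (g i).2) fun i j k hjk => ?_
  exact (hg (max i k + 1)).2.2 ⟨i, by omega⟩ ⟨j, by omega⟩ ⟨k, by omega⟩ hjk

end Ladders

section FiniteColumns

variable {S : Type*} {A : Set X} {B : Set Y} {σ : X → Y → S}

lemma not_ladderFree_of_labels
    (hσ : ∀ y ∈ B, ∀ x ∈ A, ∀ x' ∈ A, σ x y = σ x' y ↔ ρ (x, y) = ρ (x', y))
    {u : ℕ → X} {w : ℕ → Y} (hu : ∀ i, u i ∈ A) (hw : ∀ i, w i ∈ B) {c c' : S} (hc : c ≠ c')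
    (hdiag : ∀ i, σ (u i) (w i) = c) (hcross : ∀ i j, i < j → σ (u i) (w j) = c') :
    ¬LadderFree ρ := by
  -- Every row `u j` with `j ≤ k` has label `c'` in column `w (k + 1)`, hence the value
  -- `ρ (u 0, w (k + 1))` there.
  refine not_ladderFree_of_forall_ne (x := u ∘ Nat.succ) (y := w ∘ Nat.succ)
    (fun k => ρ (u 0, w (k + 1))) (fun j k hjk => .inr ?_) fun k => ?_
  · exact (hσ _ (hw _) _ (hu _) _ (hu 0)).1
      ((hcross _ _ (by omega)).trans (hcross _ _ k.succ_pos).symm)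
  · rw [comp_apply, comp_apply, Ne, ← hσ _ (hw _) _ (hu _) _ (hu 0), hdiag,
      hcross _ _ k.succ_pos]
    exact hc

lemma LadderFree.finite_columns [Finite S] (hρ : LadderFree ρ)
    (hσ : ∀ y ∈ B, ∀ x ∈ A, ∀ x' ∈ A, σ x y = σ x' y ↔ ρ (x, y) = ρ (x', y)) :
    ((fun y (x : A) => σ x y) '' B).Finite := by
  by_contra hinf
  set C := (fun y (x : A) => σ x y) '' B
  have := Set.Infinite.to_subtype hinf
  let U := hyperfilter C
  choose L hL using fun x : A => U.exists_eventually_eq fun t : C => (t : A → S) x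
  have hL_ne : ∀ᶠ t : C in U, (t : A → S) ≠ L :=
    compl_mem_hyperfilter_of_finite (Set.Subsingleton.finite (s := {t : C | (t : A → S) = L})
      fun t ht t' ht' => Subtype.ext (ht.trans ht'.symm))
  -- `L` is the limit column. A column `t ≠ L` differs from `L` at some `a t`, where almost all
  -- later columns agree with `L`: this gives the two labels `c ≠ c'`.
  obtain ⟨t₀, ht₀⟩ := hL_ne.exists
  have : Nonempty A := (Function.ne_iff.1 ht₀).nonempty
  choose! a ha using fun t : C => fun h : (t : A → S) ≠ L => Function.ne_iff.1 h
  choose y hyB hy using fun t : C => t.2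
  obtain ⟨⟨c, c'⟩, hcc⟩ := U.exists_eventually_eq fun t => ((t : A → S) (a t), L (a t))
  obtain ⟨t₁, ht₁, ht₁L⟩ := (hcc.and hL_ne).exists
  rw [Prod.mk.injEq] at ht₁
  have hc : c ≠ c' := ht₁.1 ▸ ht₁.2 ▸ ha t₁ ht₁L
  obtain ⟨f, hf⟩ := U.exists_seq_of_eventually_eventually (r := fun t t' =>
      (t : A → S) (a t) = c ∧ (t' : A → S) (a t) = c')
    (hcc.mono fun t ht => (hL (a t)).mono fun t' ht' => ⟨congrArg Prod.fst ht,
      ht'.trans (congrArg Prod.snd ht)⟩)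
  have hσf : ∀ i j, σ (a (f i)) (y (f j)) = (f j : A → S) (a (f i)) := fun i j =>
    congrFun (hy (f j)) (a (f i))
  refine not_ladderFree_of_labels hσ (u := fun i => a (f i)) (w := fun i => y (f i))
    (fun i => (a (f i)).2) (fun i => hyB _) hc
    (fun i => (hσf i i).trans (hf i (i + 1) i.lt_succ_self).1)
    (fun i j hij => (hσf i j).trans (hf i j hij).2) hρ

lemma tileable_of_finite_columns
    (hσ : ∀ y ∈ B, ∀ x ∈ A, ∀ x' ∈ A, σ x y = σ x' y → ρ (x, y) = ρ (x', y)) [Finite S]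
    (hfin : ((fun y (x : A) => σ x y) '' B).Finite) : Tileable ρ A B := by
  refine Tileable.of_fibers_right _ hfin fun y₀ _ => Tileable.of_fibers_left (fun x => σ x y₀)
    (toFinite _) fun _ _ => DependsOnAtMostOneCoord.tileable (.inr ?_)
  rintro x ⟨hx, hxy₀⟩ x' ⟨hx', hx'y₀⟩ y ⟨hy, hyy₀⟩
  have hcol : ∀ x'' (h : x'' ∈ A), σ x'' y = σ x'' y₀ := fun x'' h => congrFun hyy₀ ⟨x'', h⟩
  exact hσ y hy x hx x' hx' (by rw [hcol x hx, hcol x' hx', hxy₀, hx'y₀])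

lemma LadderFree.tileable_of_forall_mem_range [Finite S] (hρ : LadderFree ρ) (val : Y → S → Z)
    (h : ∀ x ∈ A, ∀ y ∈ B, ρ (x, y) ∈ range (val y)) : Tileable ρ A B := by
  let τ : X → Y → Set S := fun x y => val y ⁻¹' {ρ (x, y)}
  have hτ : ∀ y ∈ B, ∀ x ∈ A, ∀ x' ∈ A, τ x y = τ x' y ↔ ρ (x, y) = ρ (x', y) := by
    refine fun y hy x hx x' hx' => ⟨fun hxx' => ?_, fun hxx' => by simp only [τ, hxx']⟩
    obtain ⟨s, hs⟩ := h x hx y hy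
    have hs' : s ∈ τ x' y := hxx' ▸ hs
    exact hs.symm.trans hs'
  exact tileable_of_finite_columns (fun y hy x hx x' hx' => (hτ y hy x hx x' hx').1)
    (hρ.finite_columns hτ)

end FiniteColumns

lemma LadderFree.exists_not_tileable_on_constant_row (hρ : LadderFree ρ) {A : Set X} {B : Set Y}
    (hAB : ¬Tileable ρ A B) :
    ∃ (A' : Set X) (C : Set Y) (r : X) (w : Z), ¬Tileable ρ A' C ∧ C ⊆ B ∧
      (∀ y ∈ C, ρ (r, y) = w) ∧ ∃ y ∈ B, ρ (r, y) ≠ w := by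
  obtain ⟨A', hA'B, hA'⟩ := exists_not_tileable_with_nonconstant_rows hAB
  obtain ⟨n, x, y, hxA, -, hxy, hmax⟩ := hρ.exists_maximal_ladder A' B
  let τ : Y → Fin n → Fin n → Prop := fun b j i => ρ (x j, b) = ρ (x i, y i)
  obtain ⟨b₀, -, hC⟩ : ∃ b₀ ∈ B, ¬Tileable ρ A' {b ∈ B | τ b = τ b₀} := by
    by_contra! h
    exact hA'B (Tileable.of_fibers_right τ (toFinite _) h)
  by_cases hτ : ∃ j i, τ b₀ j i
  · obtain ⟨j, i, hji⟩ := hτ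
    obtain ⟨y₁, hy₁, y₂, hy₂, hne⟩ := hA' (x j) (hxA (mem_range_self j))
    refine ⟨A', _, x j, ρ (x i, y i), hC, sep_subset _ _,
      fun b hb => (congrFun (congrFun hb.2 j) i).mpr hji, ?_⟩
    rcases hne.ne_or_ne (ρ (x i, y i)) with h₁ | h₂
    · exact ⟨y₁, hy₁, h₁⟩
    · exact ⟨y₂, hy₂, h₂⟩
  · push Not at hτ
    refine absurd (hρ.tileable_of_forall_mem_range _ fun a ha b hb =>
      hxy.mem_range_of_not_isLadder_snoc (fun j i hji => ?_) (hmax a ha b hb.1)) hC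
    exact hτ j i ((congrFun (congrFun hb.2 j) i).mp hji)

theorem LadderFree.tileable_univ (hρ : LadderFree ρ) : Tileable ρ univ univ := by
  by_contra h₀
  let R := {p : Set X × Set Y // ¬Tileable ρ p.1 p.2}
  have hstep : ∀ p : R, ∃ q : R, ∃ (r : X) (w : Z), q.1.2 ⊆ p.1.2 ∧
      (∀ y ∈ q.1.2, ρ (r, y) = w) ∧ ∃ y ∈ p.1.2, ρ (r, y) ≠ w := by
    rintro ⟨⟨A, B⟩, hAB⟩
    obtain ⟨A', C, r, w, hC, hCB, hrC, hr⟩ := hρ.exists_not_tileable_on_constant_row hAB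
    exact ⟨⟨(A', C), hC⟩, r, w, hCB, hrC, hr⟩
  choose next r w hsub hconst b hb hne using hstep
  let s : ℕ → R := fun m => next^[m] ⟨(univ, univ), h₀⟩
  have hs : ∀ m, s (m + 1) = next (s m) := fun m => iterate_succ_apply' next m _
  have hanti : Antitone fun m => (s m).1.2 :=
    antitone_nat_of_succ_le fun m => (hs m).symm ▸ hsub (s m)
  refine not_ladderFree_of_forall_ne (x := fun m => r (s m)) (y := fun m => b (s m))
    (fun m => w (s m)) (fun j k hjk => .inl ?_) (fun m => hne (s m)) hρ
  exact hconst (s j) _ (hs j ▸ hanti (Nat.succ_le_of_lt hjk) (hb (s k)))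

end

/-- For any map `ρ : X × Y → Z`, exactly one of the following holds: either `X × Y` is
covered by finitely many mutually disjoint rectangles on each of which `ρ` depends on at
most one coordinate, or there are sequences `(xᵢ)`, `(yᵢ)` with
`ρ(xᵢ, yᵢ) ≠ ρ(xⱼ, yₖ)` for all `i` and all `j < k`. -/
theorem rectangle_cover_dichotomy {X Y Z : Type*} (ρ : X × Y → Z) :
    Xor'
      (∃ (n : ℕ) (As : Fin n → Set X) (Bs : Fin n → Set Y),
        (⋃ i, As i ×ˢ Bs i) = Set.univ ∧
        (∀ i j, i ≠ j → Disjoint (As i ×ˢ Bs i) (As j ×ˢ Bs j)) ∧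
        ∀ i, DependsOnAtMostOneCoord ρ (As i) (Bs i))
      (∃ (x : ℕ → X) (y : ℕ → Y),
        ∀ i j k : ℕ, j < k → ρ (x i, y i) ≠ ρ (x j, y k)) := by
  refine xor_iff_iff_not.2 ⟨?_, fun h => ?_⟩
  · rintro ⟨n, As, Bs, hcover, hdisj, hdep⟩ ⟨x, y, hl⟩
    have htile : Tileable ρ univ univ :=
      ⟨n, As, Bs, hcover.trans univ_prod_univ.symm, fun i j => hdisj i j, hdep⟩
    exact htile.not_isLadder (fun _ => trivial) (fun _ => trivial) hl
  · have hρ : LadderFree ρ := fun x y hl => h ⟨x, y, hl⟩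
    obtain ⟨n, As, Bs, hcover, hdisj, hdep⟩ := hρ.tileable_univ
    exact ⟨n, As, Bs, hcover.trans univ_prod_univ, fun i j => @hdisj i j, hdep⟩
end

section
/- Let X and Y be infinite compact Hausdorff spaces and Z a sub-Stonean space. Then there is no injective continuous map \rho : X \times Y \to Z. In particular, X \times Y is never homeomorphic to a sub-Stonean space when X and Y are infinite compact Hausdorff spaces. -/
/-!
Choose pairwise disjoint open sets `Uₙ ∋ xₙ` in `X` and `Vₘ ∋ yₘ` in `Y`. The grids
`A = {(xₙ, yₘ) | m < n}` and `B = {(xₙ, yₘ) | n < m}` are countable, each misses the closure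
of the other (every grid point is isolated by `Uₙ × Vₘ`), yet `(p, q)` lies in both closures
when `p`, `q` are cluster points of `(xₙ)`, `(yₘ)`. A continuous injection `ρ` is a closed
embedding, so `ρ(A)`, `ρ(B)` inherit all of this. In a compact sub-Stonean space this is
impossible: weighted sums of Urysohn functions give `f, g` with `f > 0 = g` on `A` and
`g > 0 = f` on `B`, and the disjoint open σ-compact sets `{g < f}`, `{f < g}` would have
disjoint closures.
-/

/-- A space is sub-Stonean (an F-space) if any two disjoint open σ-compact subsets have
disjoint compact closures. -/
def SubStonean (Z : Type*) [TopologicalSpace Z] : Prop :=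
  ∀ U V : Set Z, IsOpen U → IsOpen V → IsSigmaCompact U → IsSigmaCompact V →
    Disjoint U V → Disjoint (closure U) (closure V) ∧
      IsCompact (closure U) ∧ IsCompact (closure V)

open Set Filter Function

theorem Set.Countable.exists_continuous_eqOn_zero_pos {Z : Type*} [TopologicalSpace Z]
    [NormalSpace Z] [T1Space Z] {A C : Set Z} (hA : A.Countable) (hC : IsClosed C)
    (hAC : Disjoint A C) :
    ∃ f : Z → ℝ, Continuous f ∧ EqOn f 0 C ∧ ∀ a ∈ A, 0 < f a := by
  have := hA.toEncodable
  choose F hF0 hF1 hF01 using fun a : A ↦ exists_continuous_zero_one_of_isClosed hC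
    isClosed_singleton (disjoint_singleton_right.2 (hAC.notMem_of_mem_left a.2))
  set w : A → ℝ := fun a ↦ (1 / 2) ^ Encodable.encode a
  have hw : Summable w := summable_geometric_two_encode
  have hterm : ∀ a z, 0 ≤ w a * F a z ∧ w a * F a z ≤ w a := fun a z ↦
    ⟨mul_nonneg (by positivity) (hF01 a z).1,
      mul_le_of_le_one_right (by positivity) (hF01 a z).2⟩
  refine ⟨fun z ↦ ∑' a, w a * F a z,
    continuous_tsum (fun a ↦ continuous_const.mul (F a).continuous) hw
      fun a z ↦ by rw [Real.norm_of_nonneg (hterm a z).1]; exact (hterm a z).2, ?_, ?_⟩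
  · intro z hz
    simp [hF0 _ hz]
  · intro a ha
    refine (hw.of_nonneg_of_le (hterm · _ |>.1) (hterm · _ |>.2)).tsum_pos
      (hterm · _ |>.1) ⟨a, ha⟩ ?_
    simp [w, hF1 ⟨a, ha⟩ rfl]

theorem IsOpen.isSigmaCompact_preimage {Z M : Type*} [TopologicalSpace Z] [CompactSpace Z]
    [PseudoEMetricSpace M] {f : Z → M} (hf : Continuous f) {s : Set M} (hs : IsOpen s) :
    IsSigmaCompact (f ⁻¹' s) := by
  obtain ⟨F, hFc, -, hFs, -⟩ := hs.exists_iUnion_isClosed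
  exact ⟨fun n ↦ f ⁻¹' F n, fun n ↦ ((hFc n).preimage hf).isCompact, by
    rw [← preimage_iUnion, hFs]⟩

theorem SubStonean.disjoint_closure_of_countable {Z : Type*} [TopologicalSpace Z]
    [CompactSpace Z] [T2Space Z] (hZ : SubStonean Z) {A B : Set Z} (hA : A.Countable)
    (hB : B.Countable) (hAB : Disjoint A (closure B)) (hBA : Disjoint (closure A) B) :
    Disjoint (closure A) (closure B) := by
  obtain ⟨f, hf, hf0, hfA⟩ := hA.exists_continuous_eqOn_zero_pos isClosed_closure hAB
  obtain ⟨g, hg, hg0, hgB⟩ := hB.exists_continuous_eqOn_zero_pos isClosed_closure hBA.symm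
  have hAU : A ⊆ (f - g) ⁻¹' Ioi 0 := fun a ha ↦ by
    simp [hfA a ha, hg0 (subset_closure ha)]
  have hBV : B ⊆ (g - f) ⁻¹' Ioi 0 := fun b hb ↦ by
    simp [hgB b hb, hf0 (subset_closure hb)]
  have hUV : Disjoint ((f - g) ⁻¹' Ioi 0) ((g - f) ⁻¹' Ioi 0) :=
    disjoint_left.2 fun z hU hV ↦ by
      simp only [mem_preimage, mem_Ioi, Pi.sub_apply] at hU hV
      linarith
  exact (hZ _ _ (isOpen_Ioi.preimage (hf.sub hg)) (isOpen_Ioi.preimage (hg.sub hf))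
    (isOpen_Ioi.isSigmaCompact_preimage (hf.sub hg))
    (isOpen_Ioi.isSigmaCompact_preimage (hg.sub hf)) hUV).1.mono
    (closure_mono hAU) (closure_mono hBV)

theorem disjoint_image_closure_image_of_pairwise_disjoint {ι X : Type*} [TopologicalSpace X]
    {g : ι → X} {W : ι → Set X} (hW : ∀ i, IsOpen (W i)) (hgW : ∀ i, g i ∈ W i)
    (hWd : Pairwise (Disjoint on W)) {T T' : Set ι} (hTT' : Disjoint T T') :
    Disjoint (g '' T) (closure (g '' T')) := by
  refine disjoint_left.2 ?_
  rintro _ ⟨i, hi, rfl⟩ hcl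
  obtain ⟨_, hjW, j, hj, rfl⟩ := mem_closure_iff.1 hcl (W i) (hW i) (hgW i)
  obtain rfl : j = i := hWd.eq (not_disjoint_iff.2 ⟨g j, hgW j, hjW⟩)
  exact disjoint_left.1 hTT' hi hj

theorem mk_mem_closure_image_prodMap {X Y : Type*} [TopologicalSpace X] [TopologicalSpace Y]
    {x : ℕ → X} {y : ℕ → Y} {p : X} {q : Y} (hx : MapClusterPt p atTop x)
    (hy : MapClusterPt q atTop y) {T : Set (ℕ × ℕ)}
    (hT : ∀ s t : Set ℕ, s.Infinite → t.Infinite → (s ×ˢ t ∩ T).Nonempty) :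
    (p, q) ∈ closure (Prod.map x y '' T) := by
  refine mem_closure_iff_nhds.2 fun W hW ↦ ?_
  obtain ⟨U, hU, V, hV, hUV⟩ := mem_nhds_prod_iff.1 hW
  obtain ⟨k, hk, hkT⟩ := hT _ _ (Nat.frequently_atTop_iff_infinite.1 (hx.frequently hU))
    (Nat.frequently_atTop_iff_infinite.1 (hy.frequently hV))
  exact ⟨_, hUV hk, k, hkT, rfl⟩

theorem exists_countable_separated_closure_inter_nonempty (X Y : Type*) [TopologicalSpace X]
    [CompactSpace X] [T2Space X] [Infinite X] [TopologicalSpace Y] [CompactSpace Y] [T2Space Y]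
    [Infinite Y] :
    ∃ A B : Set (X × Y), A.Countable ∧ B.Countable ∧ Disjoint A (closure B) ∧
      Disjoint (closure A) B ∧ (closure A ∩ closure B).Nonempty := by
  obtain ⟨U, hUinf, hUo, hUd⟩ := exists_seq_infinite_isOpen_pairwise_disjoint X
  obtain ⟨V, hVinf, hVo, hVd⟩ := exists_seq_infinite_isOpen_pairwise_disjoint Y
  choose x hx using fun n ↦ (hUinf n).nonempty
  choose y hy using fun n ↦ (hVinf n).nonempty
  obtain ⟨p, hp⟩ := exists_clusterPt_of_compactSpace (map x atTop)
  obtain ⟨q, hq⟩ := exists_clusterPt_of_compactSpace (map y atTop)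
  have hsep : ∀ T T' : Set (ℕ × ℕ), Disjoint T T' →
      Disjoint (Prod.map x y '' T) (closure (Prod.map x y '' T')) := fun _ _ ↦
    disjoint_image_closure_image_of_pairwise_disjoint (fun k ↦ (hUo k.1).prod (hVo k.2))
      (fun k ↦ ⟨hx k.1, hy k.2⟩) fun k l hkl ↦ by
        rcases not_and_or.1 (mt Prod.ext_iff.2 hkl) with h | h
        exacts [disjoint_prod.2 (.inl (hUd h)), disjoint_prod.2 (.inr (hVd h))]
  have hlt : Disjoint {k : ℕ × ℕ | k.2 < k.1} {k | k.1 < k.2} :=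
    disjoint_left.2 fun k (h₁ : k.2 < k.1) (h₂ : k.1 < k.2) ↦ lt_asymm h₁ h₂
  refine ⟨Prod.map x y '' {k | k.2 < k.1}, Prod.map x y '' {k | k.1 < k.2},
    (to_countable _).image _, (to_countable _).image _, hsep _ _ hlt, (hsep _ _ hlt.symm).symm,
    ⟨(p, q), mk_mem_closure_image_prodMap hp hq fun s t hs ht ↦ ?_,
      mk_mem_closure_image_prodMap hp hq fun s t hs ht ↦ ?_⟩⟩
  · obtain ⟨j, hj⟩ := ht.nonempty
    obtain ⟨i, hi, hji⟩ := hs.exists_gt j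
    exact ⟨(i, j), ⟨hi, hj⟩, hji⟩
  · obtain ⟨i, hi⟩ := hs.nonempty
    obtain ⟨j, hj, hij⟩ := ht.exists_gt i
    exact ⟨(i, j), ⟨hi, hj⟩, hij⟩

/-- If `X` and `Y` are infinite compact Hausdorff spaces and `Z` is sub-Stonean, then
there is no injective continuous map `X × Y → Z`; in particular `X × Y` is never
homeomorphic to a sub-Stonean space. -/
theorem no_injective_continuous_map_into_subStonean
    {X Y Z : Type*} [TopologicalSpace X] [CompactSpace X] [T2Space X] [Infinite X]
    [TopologicalSpace Y] [CompactSpace Y] [T2Space Y] [Infinite Y]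
    [TopologicalSpace Z] [CompactSpace Z] [T2Space Z] (hZ : SubStonean Z) :
    (∀ ρ : X × Y → Z, Continuous ρ → ¬ Function.Injective ρ) ∧
    ¬ Nonempty ((X × Y) ≃ₜ Z) := by
  have hρ : ∀ ρ : X × Y → Z, Continuous ρ → ¬ Function.Injective ρ := by
    intro ρ hcont hinj
    obtain ⟨A, B, hA, hB, hAB, hBA, w, hwA, hwB⟩ :=
      exists_countable_separated_closure_inter_nonempty X Y
    have hclosure := (hcont.isClosedEmbedding hinj).closure_image_eq
    have hdisj := hZ.disjoint_closure_of_countable (hA.image ρ) (hB.image ρ)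
      (by rwa [hclosure, disjoint_image_iff hinj]) (by rwa [hclosure, disjoint_image_iff hinj])
    rw [hclosure, hclosure] at hdisj
    exact disjoint_left.1 hdisj ⟨w, hwA, rfl⟩ ⟨w, hwB, rfl⟩
  exact ⟨hρ, fun ⟨e⟩ ↦ hρ e e.continuous e.injective⟩
end

section
/- \beta\mathbb{N} is not homeomorphic to X \times Y for any infinite compact Hausdorff spaces X and Y. -/
/-!
`βℕ` is extremally disconnected, so disjoint open subsets of it have disjoint closures.
A product `X × Y` of infinite compact Hausdorff spaces is not: choose pairwise disjoint
nonempty open sets `Uₙ ⊆ X`, `Vₙ ⊆ Y` and points `(xₙ, yₙ) ∈ Uₙ × Vₙ`. The diagonal union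
`⋃ Uₙ × Vₙ` and the off-diagonal union `⋃_{m < n} Uₘ × Vₙ` are disjoint open sets, and any
cluster point `(a, b)` of `(xₙ, yₙ)` lies in the closure of both, since a neighbourhood
`u × v` of it contains `(xₘ, yₘ)` and `(xₙ, yₙ)` for some `m < n`, hence also `(xₘ, yₙ)`.
-/

open Set Filter Topology Function

section DisjointOpenSequence

variable {X : Type*} [TopologicalSpace X] [T3Space X]

lemma IsOpen.exists_isOpen_nonempty_disjoint_infinite {V : Set X} (hV : IsOpen V)
    (hVi : V.Infinite) :
    ∃ U W : Set X, IsOpen U ∧ U.Nonempty ∧ U ⊆ V ∧ IsOpen W ∧ W.Infinite ∧ W ⊆ V ∧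
      Disjoint U W := by
  have of_closed_nhds : ∀ z ∈ V, ∀ C ∈ 𝓝 z, IsClosed C → (V \ C).Infinite →
      ∃ U W : Set X, IsOpen U ∧ U.Nonempty ∧ U ⊆ V ∧ IsOpen W ∧ W.Infinite ∧ W ⊆ V ∧
        Disjoint U W := fun z hz C hC hCc hVC =>
    ⟨interior C ∩ V, V \ C, isOpen_interior.inter hV, ⟨z, mem_interior_iff_mem_nhds.2 hC, hz⟩,
      inter_subset_right, hV.sdiff hCc, hVC, sdiff_subset,
      disjoint_sdiff_right.mono_left (inter_subset_left.trans interior_subset)⟩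
  obtain ⟨x, hx, y, hy, hxy⟩ := hVi.nontrivial
  obtain ⟨U₁, -, C₁, hC₁, U₂, -, C₂, hC₂, hC₁c, hC₂c, -, -, h₁, h₂, hU⟩ :=
    disjoint_nested_nhds hxy
  have hcover : V \ C₁ ∪ V \ C₂ = V := by
    rw [← sdiff_inter, (hU.mono h₁ h₂).inter_eq, sdiff_empty]
  rcases infinite_union.1 (hcover ▸ hVi) with h | h
  · exact of_closed_nhds x hx C₁ hC₁ hC₁c h
  · exact of_closed_nhds y hy C₂ hC₂ hC₂c h

lemma exists_seq_isOpen_nonempty_pairwise_disjoint [Infinite X] :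
    ∃ U : ℕ → Set X, (∀ n, IsOpen (U n)) ∧ (∀ n, (U n).Nonempty) ∧ Pairwise (Disjoint on U) := by
  let S := {V : Set X // IsOpen V ∧ V.Infinite}
  choose U W hUo hUne hUV hWo hWi hWV hUW using
    fun V : S => V.2.1.exists_isOpen_nonempty_disjoint_infinite V.2.2
  let V : ℕ → S := fun n => Nat.rec ⟨univ, isOpen_univ, infinite_univ⟩
    (fun _ V => ⟨W V, hWo V, hWi V⟩) n
  have hV : Antitone fun n => (V n).1 := antitone_nat_of_succ_le fun n => hWV (V n)
  refine ⟨fun n => U (V n), fun n => hUo _, fun n => hUne _, ?_⟩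
  refine (pairwise_disjoint_on _).2 fun m n hmn => (hUW (V m)).mono_right ?_
  exact (hUV (V n)).trans (hV (Nat.succ_le_of_lt hmn))

end DisjointOpenSequence

lemma disjoint_iUnion_prod_iUnion_prod_lt {X Y : Type*} {U : ℕ → Set X} {V : ℕ → Set Y}
    (hU : Pairwise (Disjoint on U)) (hV : Pairwise (Disjoint on V)) :
    Disjoint (⋃ n, U n ×ˢ V n) (⋃ (m) (n) (_ : m < n), U m ×ˢ V n) := by
  simp only [disjoint_iUnion_left, disjoint_iUnion_right]
  intro m n hmn k
  rcases eq_or_ne k n with rfl | hkn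
  · exact Set.disjoint_prod.2 (Or.inl (hU hmn.ne'))
  · exact Set.disjoint_prod.2 (Or.inr (hV hkn))

section Product

variable {X Y : Type*} [TopologicalSpace X] [TopologicalSpace Y]

lemma MapClusterPt.mem_closure_iUnion_prod_lt {U : ℕ → Set X} {V : ℕ → Set Y} {x : ℕ → X}
    {y : ℕ → Y} (hx : ∀ n, x n ∈ U n) (hy : ∀ n, y n ∈ V n) {p : X × Y}
    (hp : MapClusterPt p atTop fun n => (x n, y n)) :
    p ∈ closure (⋃ (m) (n) (_ : m < n), U m ×ˢ V n) := by
  rw [mem_closure_iff_nhds]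
  intro t ht
  obtain ⟨u, hu, v, hv, huv⟩ := mem_nhds_prod_iff.1 ht
  have hfreq := frequently_atTop'.1 (hp.frequently (prod_mem_nhds hu hv))
  obtain ⟨m, hm⟩ := (hfreq 0).imp fun _ h => h.2
  obtain ⟨n, hmn, hn⟩ := hfreq m
  exact ⟨(x m, y n), huv ⟨hm.1, hn.2⟩, mem_iUnion₂.2 ⟨m, n, mem_iUnion.2 ⟨hmn, hx m, hy n⟩⟩⟩

lemma MapClusterPt.mem_closure_iUnion_prod {U : ℕ → Set X} {V : ℕ → Set Y} {x : ℕ → X}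
    {y : ℕ → Y} (hx : ∀ n, x n ∈ U n) (hy : ∀ n, y n ∈ V n) {p : X × Y}
    (hp : MapClusterPt p atTop fun n => (x n, y n)) :
    p ∈ closure (⋃ n, U n ×ˢ V n) :=
  mem_closure_iff_nhds.2 fun _ ht =>
    let ⟨n, hn⟩ := (hp.frequently ht).exists
    ⟨_, hn, mem_iUnion.2 ⟨n, hx n, hy n⟩⟩

theorem not_extremallyDisconnected_prod [CompactSpace X] [T2Space X] [Infinite X]
    [CompactSpace Y] [T2Space Y] [Infinite Y] : ¬ ExtremallyDisconnected (X × Y) := by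
  intro hED
  obtain ⟨U, hUo, hUne, hUd⟩ := exists_seq_isOpen_nonempty_pairwise_disjoint (X := X)
  obtain ⟨V, hVo, hVne, hVd⟩ := exists_seq_isOpen_nonempty_pairwise_disjoint (X := Y)
  choose x hx using hUne
  choose y hy using hVne
  obtain ⟨p, -, hp⟩ :=
    isCompact_univ.exists_mapClusterPt (f := atTop) (u := fun n => (x n, y n)) (by simp)
  have hdisj := ExtremallyDisconnected.disjoint_closure_of_disjoint_isOpen
    (disjoint_iUnion_prod_iUnion_prod_lt hUd hVd)
    (isOpen_iUnion fun n => (hUo n).prod (hVo n))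
    (isOpen_iUnion fun m => isOpen_iUnion fun n => isOpen_iUnion fun _ => (hUo m).prod (hVo n))
  exact disjoint_left.1 hdisj (hp.mem_closure_iUnion_prod hx hy)
    (hp.mem_closure_iUnion_prod_lt hx hy)

end Product

/-- `βℕ` is not homeomorphic to `X × Y` for any infinite compact Hausdorff spaces
`X` and `Y`. -/
theorem stoneCech_nat_not_product
    {X Y : Type*} [TopologicalSpace X] [CompactSpace X] [T2Space X] [Infinite X]
    [TopologicalSpace Y] [CompactSpace Y] [T2Space Y] [Infinite Y] :
    ¬ Nonempty (StoneCech ℕ ≃ₜ (X × Y)) := by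
  rintro ⟨e⟩
  have : ExtremallyDisconnected (StoneCech ℕ) :=
    CompactT2.Projective.extremallyDisconnected StoneCech.projective
  exact not_extremallyDisconnected_prod (extremallyDisconnected_of_homeo e)
end

section
/- A commutative C*-algebra C_0(X), for X a locally compact Hausdorff space, is a SAW*-algebra if and only if X is a sub-Stonean space (i.e., any two disjoint open \sigma-compact subsets of X have disjoint compact closures). -/
/-!
If `C₀(X)` is SAW*, take nonnegative functions whose cozero sets are the given disjoint open
σ-compact sets `U` and `V` (sums `∑ 2⁻ⁿ φₙ` of Urysohn functions for an exhaustion by compacts);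
the element `e` provided by the SAW* property equals `1` on `closure U` and `0` on `closure V`,
and `closure U` is compact because `e` vanishes at infinity. Conversely, cozero sets of functions
in `C₀(X)` are open and σ-compact, and an Urysohn function which is `1` on the compact set
`closure {f ≠ 0}` and `0` on `closure {g ≠ 0}` is the required `e`.
-/

open scoped ZeroAtInfty ComplexOrder

open Set Filter Function

namespace ZeroAtInftyContinuousMap

variable {X β : Type*} [TopologicalSpace X] [TopologicalSpace β]

lemma mul_eq_zero_iff_eqOn_zero [MulZeroClass β] [NoZeroDivisors β] [ContinuousMul β]
    {f g : C₀(X, β)} : f * g = 0 ↔ EqOn f 0 (support g) := by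
  simp only [ZeroAtInftyContinuousMap.ext_iff, mul_apply, zero_apply, EqOn, mem_support,
    Pi.zero_apply, mul_eq_zero]
  exact forall_congr' fun x => or_iff_not_imp_right

lemma mul_eq_right_iff_eqOn_one [MulZeroOneClass β] [IsRightCancelMulZero β] [ContinuousMul β]
    {e f : C₀(X, β)} : e * f = f ↔ EqOn e 1 (support f) := by
  simp only [ZeroAtInftyContinuousMap.ext_iff, mul_apply, EqOn, mem_support, Pi.one_apply]
  exact forall_congr' fun x => mul_left_eq_self₀.trans or_iff_not_imp_right

lemma isCompact_preimage [Zero β] (f : C₀(X, β)) {s : Set β} (hs : IsClosed s)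
    (h0 : (0 : β) ∉ s) : IsCompact (f ⁻¹' s) := by
  obtain ⟨K, hK, hKs⟩ := mem_cocompact.mp (zero_at_infty f (hs.isOpen_compl.mem_nhds h0))
  exact hK.of_isClosed_subset (hs.preimage f.continuous) fun x hx =>
    by_contra fun hxK => hKs hxK hx

lemma isSigmaCompact_support {E : Type*} [NormedAddCommGroup E] (f : C₀(X, E)) :
    IsSigmaCompact (support f) := by
  refine ⟨fun n : ℕ => f ⁻¹' {y | 1 / (n + 1 : ℝ) ≤ ‖y‖}, fun n => ?_, ?_⟩
  · exact f.isCompact_preimage (isClosed_le continuous_const continuous_norm)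
      (by simp only [mem_ofPred_eq, norm_zero, not_le]; positivity)
  · ext x
    simp only [mem_iUnion, mem_preimage, mem_ofPred_eq, mem_support, ← norm_pos_iff]
    constructor
    · exact fun ⟨n, hn⟩ => lt_of_lt_of_le (by positivity) hn
    · exact fun hx => (exists_nat_one_div_lt hx).imp fun n => le_of_lt

def ofReal (f : C₀(X, ℝ)) : C₀(X, ℂ) where
  toFun x := f x
  continuous_toFun := Complex.continuous_ofReal.comp f.continuous
  zero_at_infty' := by
    simpa [comp_def] using (Complex.continuous_ofReal.tendsto 0).comp (zero_at_infty f)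

@[simp] lemma ofReal_apply (f : C₀(X, ℝ)) (x : X) : ofReal f x = (f x : ℂ) := rfl

@[simp] lemma support_ofReal (f : C₀(X, ℝ)) : support (ofReal f) = support f := by
  ext x; simp

end ZeroAtInftyContinuousMap

open ZeroAtInftyContinuousMap

section

variable {X : Type*} [TopologicalSpace X] [RegularSpace X] [LocallyCompactSpace X]

theorem IsOpen.exists_zeroAtInfty_nonneg_support_eq {U : Set X} (hU : IsOpen U)
    (hσ : IsSigmaCompact U) : ∃ f : C₀(X, ℝ), 0 ≤ ⇑f ∧ support f = U := by
  obtain ⟨K, hK, rfl⟩ := hσ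
  choose φ hφ₁ hφ₀ hφc hφI using fun n => exists_continuous_one_zero_of_isCompact (hK n)
    hU.isClosed_compl (disjoint_compl_right_iff_subset.mpr (subset_iUnion K n))
  have hbound (n : ℕ) (x : X) : ‖(1 / 2 : ℝ) ^ n * φ n x‖ ≤ (1 / 2) ^ n := by
    rw [Real.norm_of_nonneg (mul_nonneg (by positivity) (hφI n x).1)]
    exact mul_le_of_le_one_right (by positivity) (hφI n x).2
  have hsum (x : X) : Summable fun n => (1 / 2 : ℝ) ^ n * φ n x :=
    summable_geometric_two.of_norm_bounded (hbound · x)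
  refine ⟨⟨⟨fun x => ∑' n, (1 / 2 : ℝ) ^ n * φ n x,
    continuous_tsum (fun n => by fun_prop) summable_geometric_two hbound⟩, ?_⟩, ?_, ?_⟩
  · simpa using tendsto_tsum_of_dominated_convergence summable_geometric_two
      (fun n => (hφc n).is_zero_at_infty.const_mul _) (Eventually.of_forall fun x n => hbound n x)
  · exact fun x => tsum_nonneg fun n => mul_nonneg (by positivity) (hφI n x).1
  · ext x
    change ∑' n, _ ≠ 0 ↔ x ∈ ⋃ n, K n
    refine ⟨fun hx => by_contra fun hxK => hx ?_, fun hxK => ?_⟩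
    · simp [fun n => hφ₀ n hxK]
    · obtain ⟨n, hn⟩ := mem_iUnion.mp hxK
      exact ((hsum x).tsum_pos (fun m => mul_nonneg (by positivity) (hφI m x).1) n
        (mul_pos (by positivity) (by simp [hφ₁ n hn]))).ne'

theorem exists_eqOn_closure_of_sawStar
    (h : ∀ f g : C₀(X, ℂ), (∀ t, 0 ≤ f t) → (∀ t, 0 ≤ g t) → f * g = 0 →
      ∃ e : C₀(X, ℂ), (∀ t, 0 ≤ e t) ∧ e * f = f ∧ e * g = 0)
    {U V : Set X} (hU : IsOpen U) (hV : IsOpen V) (hUσ : IsSigmaCompact U)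
    (hVσ : IsSigmaCompact V) (hUV : Disjoint U V) :
    ∃ e : C₀(X, ℂ), EqOn e 1 (closure U) ∧ EqOn e 0 (closure V) := by
  obtain ⟨f, hf, rfl⟩ := hU.exists_zeroAtInfty_nonneg_support_eq hUσ
  obtain ⟨g, hg, rfl⟩ := hV.exists_zeroAtInfty_nonneg_support_eq hVσ
  have hfg : ofReal f * ofReal g = 0 := by
    rw [mul_eq_zero_iff_eqOn_zero, support_ofReal, ← support_disjoint_iff, support_ofReal]
    exact hUV
  obtain ⟨e, -, hef, heg⟩ := h _ _ (fun t => Complex.zero_le_real.mpr (hf t))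
    (fun t => Complex.zero_le_real.mpr (hg t)) hfg
  rw [mul_eq_right_iff_eqOn_one, support_ofReal] at hef
  rw [mul_eq_zero_iff_eqOn_zero, support_ofReal] at heg
  exact ⟨e, hef.closure e.continuous continuous_const,
    heg.closure e.continuous continuous_const⟩

theorem subStonean_of_sawStar
    (h : ∀ f g : C₀(X, ℂ), (∀ t, 0 ≤ f t) → (∀ t, 0 ≤ g t) → f * g = 0 →
      ∃ e : C₀(X, ℂ), (∀ t, 0 ≤ e t) ∧ e * f = f ∧ e * g = 0) :
    SubStonean X := by
  intro U V hU hV hUσ hVσ hUV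
  obtain ⟨e, he₁, he₀⟩ := exists_eqOn_closure_of_sawStar h hU hV hUσ hVσ hUV
  obtain ⟨e', he'₁, -⟩ := exists_eqOn_closure_of_sawStar h hV hU hVσ hUσ hUV.symm
  refine ⟨disjoint_left.mpr fun x hxU hxV => one_ne_zero ((he₁ hxU).symm.trans (he₀ hxV)),
    ?_, ?_⟩
  · exact (e.isCompact_preimage isClosed_singleton zero_ne_one).of_isClosed_subset
      isClosed_closure fun x hx => he₁ hx
  · exact (e'.isCompact_preimage isClosed_singleton zero_ne_one).of_isClosed_subset
      isClosed_closure fun x hx => he'₁ hx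

theorem sawStar_of_subStonean (h : SubStonean X) (f g : C₀(X, ℂ)) (hfg : f * g = 0) :
    ∃ e : C₀(X, ℂ), (∀ t, 0 ≤ e t) ∧ e * f = f ∧ e * g = 0 := by
  have hdisj : Disjoint (support f) (support g) :=
    support_disjoint_iff.mpr (mul_eq_zero_iff_eqOn_zero.mp hfg)
  obtain ⟨hcl, hcU, -⟩ := h _ _ f.continuous.isOpen_support g.continuous.isOpen_support
    f.isSigmaCompact_support g.isSigmaCompact_support hdisj
  obtain ⟨φ, hφ₁, hφ₀, hφc, hφI⟩ :=
    exists_continuous_one_zero_of_isCompact hcU isClosed_closure hcl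
  refine ⟨ofReal ⟨φ, hφc.is_zero_at_infty⟩, fun t => Complex.zero_le_real.mpr (hφI t).1,
    ?_, ?_⟩
  · exact mul_eq_right_iff_eqOn_one.mpr fun x hx =>
      (congrArg ((↑) : ℝ → ℂ) (hφ₁ (subset_closure hx))).trans Complex.ofReal_one
  · exact mul_eq_zero_iff_eqOn_zero.mpr fun x hx =>
      (congrArg ((↑) : ℝ → ℂ) (hφ₀ (subset_closure hx))).trans Complex.ofReal_zero

end

/-- `C₀(X)` is a SAW*-algebra (for any two orthogonal positive elements `f, g` there is
a positive `e` with `e f = f` and `e g = 0`) if and only if `X` is sub-Stonean. -/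
theorem c0_sawstar_iff_subStonean
    (X : Type*) [TopologicalSpace X] [LocallyCompactSpace X] [T2Space X] :
    (∀ f g : C₀(X, ℂ), (∀ t, 0 ≤ f t) → (∀ t, 0 ≤ g t) → f * g = 0 →
      ∃ e : C₀(X, ℂ), (∀ t, 0 ≤ e t) ∧ e * f = f ∧ e * g = 0) ↔
    SubStonean X :=
  ⟨subStonean_of_sawStar, fun h f g _ _ => sawStar_of_subStonean h f g⟩
end

section
/- Let X and Y be compact Hausdorff spaces, each containing a countable discrete sequence of points whose closures of complementary subsequences are disjoint (so each closure is homeomorphic to \beta\mathbb{N}). If the closure of the product grid \{(x_m, y_n)\} in X \times Y is homeomorphic to \beta\mathbb{N}, then a contradiction follows; i.e., the closure of such a grid in a product of two infinite compact spaces is never homeomorphic to \beta\mathbb{N}. -/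
/-!
The closure of the grid is `cl {xₘ} × cl {yₙ}`, in which every grid point `(xₘ, yₙ)` is
isolated. Hence the grid points above and below the diagonal form two disjoint open sets. If
`p` and `q` are cluster points of `(xₘ)` and `(yₙ)`, then `(p, q)` lies in the closure of both,
which is impossible in an extremally disconnected space such as `βℕ`.
-/

open Set Filter Function Topology

section IsolatedSequence

variable {ι X : Type*} [TopologicalSpace X] {x : ι → X}

theorem injective_of_notMem_closure_image_compl (hx : ∀ i, x i ∉ closure (x '' {i}ᶜ)) :
    Injective x := by
  intro i j hij
  by_contra hne
  exact hx i (subset_closure ⟨j, Ne.symm hne, hij.symm⟩)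

theorem isOpen_singleton_codRestrict_closure_range [T1Space X] {h : ∀ j, x j ∈ closure (range x)}
    {i : ι} (hi : x i ∉ closure (x '' {i}ᶜ)) :
    IsOpen {codRestrict x (closure (range x)) h i} := by
  refine isOpen_induced_iff.mpr ⟨(closure (x '' {i}ᶜ))ᶜ, isClosed_closure.isOpen_compl, ?_⟩
  ext ⟨z, hz⟩
  rw [← insert_image_compl_eq_range, insert_eq, closure_union, closure_singleton] at hz
  simp only [mem_preimage, mem_compl_iff, mem_singleton_iff, Subtype.ext_iff, val_codRestrict_apply]
  constructor
  · exact hz.resolve_right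
  · rintro rfl
    exact hi

end IsolatedSequence

theorem MapClusterPt.exists_lt_and_mem {P Q : Type*} [TopologicalSpace P] [TopologicalSpace Q]
    {x : ℕ → P} {y : ℕ → Q} {p : P} {q : Q} (hp : MapClusterPt p atTop x)
    (hq : MapClusterPt q atTop y) {U : Set P} {V : Set Q} (hU : U ∈ 𝓝 p) (hV : V ∈ 𝓝 q) :
    ∃ m n, m < n ∧ x m ∈ U ∧ y n ∈ V := by
  obtain ⟨m, hm⟩ := (hp.frequently hU).exists
  obtain ⟨n, hn, hmn⟩ := ((hq.frequently hV).and_eventually (eventually_gt_atTop m)).exists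
  exact ⟨m, n, hmn, hm, hn⟩

theorem not_extremallyDisconnected_prod_of_mapClusterPt {P Q : Type*} [TopologicalSpace P]
    [TopologicalSpace Q] {x : ℕ → P} {y : ℕ → Q} (hx : Injective x) (hy : Injective y)
    (hxo : ∀ m, IsOpen {x m}) (hyo : ∀ n, IsOpen {y n}) {p : P} {q : Q}
    (hp : MapClusterPt p atTop x) (hq : MapClusterPt q atTop y) :
    ¬ ExtremallyDisconnected (P × Q) := by
  intro hED
  have hopen (S : Set (ℕ × ℕ)) : IsOpen (Prod.map x y '' S) := by
    rw [image_eq_iUnion]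
    refine isOpen_biUnion fun i _ => ?_
    have := (hxo i.1).prod (hyo i.2)
    rwa [singleton_prod_singleton] at this
  have hdisj : Disjoint (Prod.map x y '' {i | i.1 < i.2}) (Prod.map x y '' {i | i.2 < i.1}) :=
    (disjoint_image_iff (hx.prodMap hy)).mpr <| disjoint_left.mpr fun _ h h' =>
      lt_asymm (α := ℕ) h h'
  have hbasis := (nhds_basis_opens p).prod_nhds (nhds_basis_opens q)
  have hA : (p, q) ∈ closure (Prod.map x y '' {i | i.1 < i.2}) := by
    rw [mem_closure_iff_nhds_basis hbasis]
    rintro ⟨U, V⟩ ⟨⟨hpU, hU⟩, hqV, hV⟩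
    obtain ⟨m, n, hmn, hxm, hyn⟩ := hp.exists_lt_and_mem hq (hU.mem_nhds hpU) (hV.mem_nhds hqV)
    exact ⟨(x m, y n), ⟨(m, n), hmn, rfl⟩, hxm, hyn⟩
  have hB : (p, q) ∈ closure (Prod.map x y '' {i | i.2 < i.1}) := by
    rw [mem_closure_iff_nhds_basis hbasis]
    rintro ⟨U, V⟩ ⟨⟨hpU, hU⟩, hqV, hV⟩
    obtain ⟨n, m, hnm, hyn, hxm⟩ := hq.exists_lt_and_mem hp (hV.mem_nhds hqV) (hU.mem_nhds hpU)
    exact ⟨(x m, y n), ⟨(m, n), hnm, rfl⟩, hxm, hyn⟩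
  exact (hED.disjoint_closure_of_disjoint_isOpen hdisj (hopen _) (hopen _)).notMem_of_mem_left hA hB

/-- Let `X`, `Y` be compact Hausdorff spaces, each containing a sequence of points such
that closures of complementary subsequences are disjoint.  Then the closure of the
product grid `{(xₘ, yₙ)}` in `X × Y` is not homeomorphic to `βℕ`. -/
theorem closure_of_grid_not_stoneCech
    {X Y : Type*} [TopologicalSpace X] [CompactSpace X] [T2Space X]
    [TopologicalSpace Y] [CompactSpace Y] [T2Space Y]
    (x : ℕ → X) (hx : ∀ D : Set ℕ, Disjoint (closure (x '' D)) (closure (x '' Dᶜ)))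
    (y : ℕ → Y) (hy : ∀ D : Set ℕ, Disjoint (closure (y '' D)) (closure (y '' Dᶜ))) :
    ¬ Nonempty
      ((closure (Set.range fun p : ℕ × ℕ => (x p.1, y p.2)) : Set (X × Y)) ≃ₜ
        StoneCech ℕ) := by
  rintro ⟨e⟩
  have hxi (i : ℕ) : x i ∉ closure (x '' {i}ᶜ) :=
    (hx {i}).notMem_of_mem_left (subset_closure (mem_image_of_mem x rfl))
  have hyi (i : ℕ) : y i ∉ closure (y '' {i}ᶜ) :=
    (hy {i}).notMem_of_mem_left (subset_closure (mem_image_of_mem y rfl))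
  let x' := codRestrict x (closure (range x)) fun i => subset_closure (mem_range_self i)
  let y' := codRestrict y (closure (range y)) fun i => subset_closure (mem_range_self i)
  have := isCompact_iff_compactSpace.mp (isClosed_closure (s := range x)).isCompact
  have := isCompact_iff_compactSpace.mp (isClosed_closure (s := range y)).isCompact
  obtain ⟨p, hp⟩ := exists_clusterPt_of_compactSpace (map x' atTop)
  obtain ⟨q, hq⟩ := exists_clusterPt_of_compactSpace (map y' atTop)
  have hgrid : closure (range fun p : ℕ × ℕ => (x p.1, y p.2))
      = closure (range x) ×ˢ closure (range y) := by
    rw [← closure_prod_eq, ← range_prodMap]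
    rfl
  have : ExtremallyDisconnected (StoneCech ℕ) :=
    CompactT2.Projective.extremallyDisconnected StoneCech.projective
  exact not_extremallyDisconnected_prod_of_mapClusterPt
    ((injective_codRestrict _).mpr (injective_of_notMem_closure_image_compl hxi))
    ((injective_codRestrict _).mpr (injective_of_notMem_closure_image_compl hyi))
    (fun m => isOpen_singleton_codRestrict_closure_range (hxi m))
    (fun n => isOpen_singleton_codRestrict_closure_range (hyi n)) hp hq
    (extremallyDisconnected_of_homeo
      (e.symm.trans ((Homeomorph.setCongr hgrid).trans (Homeomorph.Set.prod _ _))))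
end
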